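/- arXiv:1708.09738 — 4 statements merged into one kernel-verified Lean document; each statement's English description precedes it below -/
import Mathlib

section
/- For any PVF V and any compactly supported probability measures μ, ν on ℝⁿ, the Wasserstein distance between V[μ] and V[ν] on the tangent bundle satisfies W^{Tℝⁿ}(V[μ], V[ν]) ≤ 𝒲(V[μ], V[ν]) + W(μ, ν), where 𝒲(V₁,V₂) = inf { ∫ |v−w| dT(x,v,y,w) : T ∈ P(V₁,V₂), π₁₃#T ∈ P^{opt}(μ₁,μ₂) }. In particular, if V satisfies the Lipschitz-type condition (H3) (𝒲(V[μ],V[ν]) ≤ K(R) W(μ,ν) whenever both supports lie in B(0,R)), then V is locally Lipschitz continuous with respect to W and W^{Tℝⁿ}. -/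
open MeasureTheory Metric Set Filter
open scoped NNReal ENNReal Topology

noncomputable section

/-- Euclidean space ℝⁿ. -/
abbrev Euc (n : ℕ) := EuclideanSpace ℝ (Fin n)

namespace MDE

variable {X : Type*} [NormedAddCommGroup X] [InnerProductSpace ℝ X] [CompleteSpace X]
  [MeasurableSpace X] [BorelSpace X]

/-- `τ` is a transference plan (coupling) between `μ` and `ν`. -/
def IsCoupling {Y Z : Type*} [MeasurableSpace Y] [MeasurableSpace Z]
    (τ : Measure (Y × Z)) (μ : Measure Y) (ν : Measure Z) : Prop :=
  τ.map Prod.fst = μ ∧ τ.map Prod.snd = ν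

/-- The 1-Wasserstein distance. -/
def Wass {Y : Type*} [MeasurableSpace Y] [PseudoMetricSpace Y]
    (μ ν : Measure Y) : ℝ :=
  sInf { r | ∃ τ : Measure (Y × Y), IsCoupling τ μ ν ∧ r = ∫ p, dist p.1 p.2 ∂τ }

/-- `τ` is an optimal transference plan between `μ` and `ν` for the 1-Wasserstein cost. -/
def IsOptPlan {Y : Type*} [MeasurableSpace Y] [PseudoMetricSpace Y]
    (τ : Measure (Y × Y)) (μ ν : Measure Y) : Prop :=
  IsCoupling τ μ ν ∧ (∫ p, dist p.1 p.2 ∂τ) = Wass μ ν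

/-- The support of `μ` is contained in `s`. -/
def SuppIn {Y : Type*} [MeasurableSpace Y] (μ : Measure Y) (s : Set Y) : Prop :=
  μ sᶜ = 0

/-- Compactly supported probability measure. -/
def Pc (μ : Measure X) : Prop :=
  IsProbabilityMeasure μ ∧ ∃ R : ℝ, 0 ≤ R ∧ SuppIn μ (closedBall 0 R)

/-- A probability vector field: assigns to a measure on the base a measure on the tangent
bundle `X × X`. -/
abbrev PVF (X : Type*) [MeasurableSpace X] := Measure X → Measure (X × X)

/-- The defining property of a PVF: the first marginal of `V[μ]` is `μ`. -/
def IsPVF (V : PVF X) : Prop := ∀ μ : Measure X, Pc μ → (V μ).map Prod.fst = μ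

/-- (H1): support sublinearity of the fiber velocities. -/
def H1 (V : PVF X) (C : ℝ) : Prop :=
  ∀ μ : Measure X, Pc μ → ∀ R : ℝ, 0 ≤ R → SuppIn μ (closedBall 0 R) →
    SuppIn (V μ) {p : X × X | ‖p.2‖ ≤ C * (1 + R)}

/-- The quantity `𝒲`: Wasserstein distance of the fiber components over transference
plans that are optimal on the base. -/
def calW {Y : Type*} [MeasurableSpace Y] [PseudoMetricSpace Y]
    (W₁ W₂ : Measure (Y × Y)) : ℝ :=
  sInf { r | ∃ T : Measure ((Y × Y) × (Y × Y)), IsCoupling T W₁ W₂ ∧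
    IsOptPlan (T.map (fun p => (p.1.1, p.2.1))) (W₁.map Prod.fst) (W₂.map Prod.fst) ∧
    r = ∫ p, dist p.1.2 p.2.2 ∂T }

/-- (H2): continuity of `V` for the Wasserstein metrics. -/
def H2 (V : PVF X) : Prop :=
  ∀ μ : Measure X, Pc μ → ∀ ε > (0:ℝ), ∃ δ > (0:ℝ), ∀ ν : Measure X, Pc ν →
    Wass μ ν < δ → Wass (V μ) (V ν) < ε

/-- (H3): Lipschitz-type condition on `V` in terms of `𝒲`. -/
def H3 (V : PVF X) : Prop :=
  ∀ R > (0:ℝ), ∃ K > (0:ℝ), ∀ μ ν : Measure X, Pc μ → Pc ν →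
    SuppIn μ (closedBall 0 R) → SuppIn ν (closedBall 0 R) →
    calW (V μ) (V ν) ≤ K * Wass μ ν

/-- Weak solution of the MDE `μ̇ = V[μ]` on `[0,T]` (integral formulation). -/
def IsWeakSol (V : PVF X) (T : ℝ) (μ : ℝ → Measure X) : Prop :=
  ∀ f : X → ℝ, ContDiff ℝ (⊤ : ℕ∞) f → HasCompactSupport f →
    IntegrableOn (fun s => ∫ p : X × X, (inner ℝ (gradient f p.1) p.2 : ℝ) ∂(V (μ s)))
      (Icc 0 T) volume ∧
    ∀ t ∈ Icc (0:ℝ) T, ∫ x, f x ∂(μ t) =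
      ∫ x, f x ∂(μ 0) + ∫ s in Icc 0 t, ∫ p : X × X, (inner ℝ (gradient f p.1) p.2 : ℝ) ∂(V (μ s))

/-- Finite convex combination of Dirac deltas. -/
def IsDiracComb (μ : Measure X) : Prop :=
  ∃ (k : ℕ) (m : Fin k → ℝ≥0) (x : Fin k → X),
    (∀ i, 0 < m i) ∧ (∑ i, m i) = 1 ∧ μ = ∑ i, (m i : ℝ≥0∞) • Measure.dirac (x i)

/-- Lipschitz semigroup of solutions of `μ̇ = V[μ]` on `[0,T]` (Definition 4.3). -/
def IsLipschitzSemigroup (V : PVF X) (T : ℝ) (S : ℝ → Measure X → Measure X) : Prop :=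
  (∀ μ : Measure X, Pc μ → ∀ t ∈ Icc (0:ℝ) T, Pc (S t μ)) ∧
  (∀ μ : Measure X, Pc μ → S 0 μ = μ) ∧
  (∀ μ : Measure X, Pc μ → ∀ t s : ℝ, 0 ≤ t → 0 ≤ s → t + s ≤ T →
    S t (S s μ) = S (t + s) μ) ∧
  (∀ μ : Measure X, Pc μ → IsWeakSol V T (fun t => S t μ)) ∧
  ∃ C > (0:ℝ), ∀ R > (0:ℝ), ∃ CR > (0:ℝ), ∀ μ ν : Measure X, Pc μ → Pc ν →
    SuppIn μ (closedBall 0 R) → SuppIn ν (closedBall 0 R) →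
    ∀ t ∈ Icc (0:ℝ) T, ∀ s ∈ Icc (0:ℝ) T,
      SuppIn (S t μ) (closedBall 0 (Real.exp (C * t) * (R + 1))) ∧
      Wass (S t μ) (S t ν) ≤ Real.exp (CR * t) * Wass μ ν ∧
      Wass (S t μ) (S s μ) ≤ CR * |t - s|

/-- The PVF associated to a vector field `v`: `V^v[μ] = (id, v)#μ = μ ⊗ δ_{v(x)}`. -/
def Vvec (v : X → X) : PVF X := fun μ => μ.map (fun x => (x, v x))

end MDE

open MDE


open ProbabilityTheory

section Aux
variable {Z : Type*} [MetricSpace Z] [SecondCountableTopology Z]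
  [MeasurableSpace Z] [BorelSpace Z]

lemma MDEaux.exists_basis_seq :
    ∃ b : ℕ → Set Z, (∀ i, IsOpen (b i)) ∧
      ∀ (F G : Set Z), IsCompact F → IsOpen G → F ⊆ G →
        ∃ t : Finset ℕ, F ⊆ (⋃ i ∈ t, b i) ∧ (⋃ i ∈ t, b i) ⊆ G := by
  obtain ⟨Bas, hBc, -, hBas⟩ := TopologicalSpace.exists_countable_basis Z
  have hne : (insert (∅ : Set Z) Bas).Nonempty := ⟨∅, mem_insert _ _⟩
  obtain ⟨b, hb⟩ := (hBc.insert ∅).exists_eq_range hne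
  refine ⟨b, ?_, ?_⟩
  · intro i
    have : b i ∈ insert (∅ : Set Z) Bas := hb ▸ mem_range_self i
    rcases this with h | h
    · simp [h]
    · exact hBas.isOpen h
  · intro F G hF hG hFG
    have hcover : F ⊆ ⋃ i : {i : ℕ // b i ⊆ G}, b i := by
      intro x hx
      obtain ⟨s, hsB, hxs, hsG⟩ := hBas.exists_subset_of_mem_open (hFG hx) hG
      have : s ∈ insert (∅ : Set Z) Bas := mem_insert_of_mem _ hsB
      rw [hb] at this
      obtain ⟨i, hi⟩ := this
      exact mem_iUnion.2 ⟨⟨i, hi ▸ hsG⟩, hi ▸ hxs⟩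
    obtain ⟨t, ht⟩ := hF.elim_finite_subcover (fun i : {i : ℕ // b i ⊆ G} => b i)
      (fun i => by
        have : b i.1 ∈ insert (∅ : Set Z) Bas := hb ▸ mem_range_self i.1
        rcases this with h | h
        · simp [h]
        · exact hBas.isOpen h) hcover
    refine ⟨t.image Subtype.val, ?_, ?_⟩
    · refine ht.trans ?_
      intro x hx
      rcases mem_iUnion₂.1 hx with ⟨i, hi, hxi⟩
      exact mem_iUnion₂.2 ⟨i.1, Finset.mem_image_of_mem _ hi, hxi⟩
    · intro x hx
      rcases mem_iUnion₂.1 hx with ⟨i, hi, hxi⟩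
      rcases Finset.mem_image.1 hi with ⟨j, _, rfl⟩
      exact j.2 hxi

lemma MDEaux.exists_limit_measure (K : Set Z) (hK : IsCompact K) (γ : ℕ → Measure Z)
    (hprob : ∀ k, IsProbabilityMeasure (γ k)) (hsupp : ∀ k, γ k Kᶜ = 0) :
    ∃ (μ₀ : Measure Z) (φ : ℕ → ℕ), IsProbabilityMeasure μ₀ ∧ μ₀ Kᶜ = 0 ∧ StrictMono φ ∧
      (∀ f : BoundedContinuousFunction Z ℝ,
        Tendsto (fun j => ∫ x, f x ∂(γ (φ j))) atTop (𝓝 (∫ x, f x ∂μ₀))) ∧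
      (∀ f : BoundedContinuousFunction Z ℝ≥0,
        Tendsto (fun j => ∫⁻ x, (f x : ℝ≥0∞) ∂(γ (φ j))) atTop (𝓝 (∫⁻ x, (f x : ℝ≥0∞) ∂μ₀))) := by
  classical
  obtain ⟨b, hbo, hbcov⟩ := MDEaux.exists_basis_seq (Z := Z)
  set e : Finset ℕ → Set Z := fun t => ⋃ i ∈ t, b i with he
  have heo : ∀ t, IsOpen (e t) := fun t => isOpen_biUnion (fun i _ => hbo i)
  have heunion : ∀ t t' : Finset ℕ, e (t ∪ t') = e t ∪ e t' := by
    intro t t'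
    simp only [he, Finset.set_biUnion_union]
  -- extract a subsequence along which all γ k (e t) converge
  obtain ⟨L, φ, hφ, hLtendsto⟩ :=
    SeqCompactSpace.tendsto_subseq (fun k (t : Finset ℕ) => γ k (e t))
  rw [tendsto_pi_nhds] at hLtendsto
  have hL : ∀ t : Finset ℕ, Tendsto (fun j => γ (φ j) (e t)) atTop (𝓝 (L t)) := by
    intro t; exact hLtendsto t
  -- properties of L
  have hLle : ∀ t, L t ≤ 1 := fun t =>
    le_of_tendsto (hL t) (Eventually.of_forall (fun j => prob_le_one))
  have hLne : ∀ t, L t ≠ ∞ := fun t => ((hLle t).trans_lt (by norm_num)).ne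
  have hLadd : ∀ t t', L (t ∪ t') ≤ L t + L t' := by
    intro t t'
    refine le_of_tendsto_of_tendsto' (hL (t ∪ t')) ((hL t).add (hL t')) (fun j => ?_)
    rw [heunion]
    exact measure_union_le _ _
  have hLone : ∀ t, K ⊆ e t → L t = 1 := by
    intro t hKt
    have hconst : ∀ j, γ (φ j) (e t) = 1 := by
      intro j
      refine le_antisymm prob_le_one ?_
      calc (1 : ℝ≥0∞) = γ (φ j) univ := (measure_univ).symm
        _ ≤ γ (φ j) (e t ∪ Kᶜ) := by
            refine measure_mono (fun x _ => ?_)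
            by_cases hx : x ∈ K
            · exact Or.inl (hKt hx)
            · exact Or.inr hx
        _ ≤ γ (φ j) (e t) + γ (φ j) Kᶜ := measure_union_le _ _
        _ = γ (φ j) (e t) := by rw [hsupp]; ring
    have hconst' : Tendsto (fun j => γ (φ j) (e t)) atTop (𝓝 1) := by
      simp only [hconst]; exact tendsto_const_nhds
    exact tendsto_nhds_unique (hL t) hconst'
  -- the set function
  set Λ : Set Z → ℝ≥0∞ := fun s => ⨅ t : {t : Finset ℕ // s ⊆ e t}, L t.1 with hΛ
  have hΛmono : ∀ {s s' : Set Z}, s ⊆ s' → Λ s ≤ Λ s' := by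
    intro s s' h
    exact le_iInf fun t => iInf_le_of_le ⟨t.1, h.trans t.2⟩ le_rfl
  have hΛle_of_cover : ∀ {s : Set Z} {t : Finset ℕ}, s ⊆ e t → Λ s ≤ L t := by
    intro s t h
    exact iInf_le_of_le ⟨t, h⟩ le_rfl
  have hΛcompact_le : ∀ {F : Set Z}, IsCompact F → Λ F ≤ 1 := by
    intro F hF
    obtain ⟨t, ht, -⟩ := hbcov F univ hF isOpen_univ (subset_univ F)
    exact (hΛle_of_cover ht).trans (hLle t)
  have hΛne : ∀ {F : Set Z}, IsCompact F → Λ F ≠ ∞ :=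
    fun hF => ((hΛcompact_le hF).trans_lt (by norm_num)).ne
  have hΛunion : ∀ (F₁ F₂ : Set Z), IsCompact F₁ → IsCompact F₂ →
      Λ (F₁ ∪ F₂) ≤ Λ F₁ + Λ F₂ := by
    intro F₁ F₂ hF₁ hF₂
    obtain ⟨t10, ht10, -⟩ := hbcov F₁ univ hF₁ isOpen_univ (subset_univ F₁)
    obtain ⟨t20, ht20, -⟩ := hbcov F₂ univ hF₂ isOpen_univ (subset_univ F₂)
    haveI : Nonempty {t : Finset ℕ // F₁ ⊆ e t} := ⟨⟨t10, ht10⟩⟩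
    haveI : Nonempty {t : Finset ℕ // F₂ ⊆ e t} := ⟨⟨t20, ht20⟩⟩
    rw [hΛ]
    simp only []
    rw [ENNReal.iInf_add]
    refine le_iInf fun t₁ => ?_
    rw [ENNReal.add_iInf]
    refine le_iInf fun t₂ => ?_
    have hcover : F₁ ∪ F₂ ⊆ e (t₁.1 ∪ t₂.1) := by
      rw [heunion]
      exact union_subset (t₁.2.trans subset_union_left) (t₂.2.trans subset_union_right)
    exact (hΛle_of_cover hcover).trans (hLadd t₁.1 t₂.1)
  have hΛdisj : ∀ (F₁ F₂ : Set Z), IsCompact F₁ → IsCompact F₂ → Disjoint F₁ F₂ →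
      Λ F₁ + Λ F₂ ≤ Λ (F₁ ∪ F₂) := by
    intro F₁ F₂ hF₁ hF₂ hdisj
    obtain ⟨U, W, hUo, hWo, hF₁U, hF₂W, hUW⟩ :=
      SeparatedNhds.of_isCompact_isCompact hF₁ hF₂ hdisj
    refine le_iInf fun t => ?_
    obtain ⟨t₁, ht₁, ht₁'⟩ := hbcov F₁ (U ∩ e t.1) hF₁ (hUo.inter (heo t.1))
      (subset_inter hF₁U (subset_union_left.trans t.2))
    obtain ⟨t₂, ht₂, ht₂'⟩ := hbcov F₂ (W ∩ e t.1) hF₂ (hWo.inter (heo t.1))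
      (subset_inter hF₂W (subset_union_right.trans t.2))
    have hdisj' : Disjoint (e t₁) (e t₂) :=
      hUW.mono (ht₁'.trans inter_subset_left) (ht₂'.trans inter_subset_left)
    have hsum : ∀ j, γ (φ j) (e t₁) + γ (φ j) (e t₂) ≤ γ (φ j) (e t.1) := by
      intro j
      rw [← measure_union hdisj' (heo t₂).measurableSet]
      exact measure_mono (union_subset (ht₁'.trans inter_subset_right)
        (ht₂'.trans inter_subset_right))
    have h12 : L t₁ + L t₂ ≤ L t.1 :=
      le_of_tendsto_of_tendsto' ((hL t₁).add (hL t₂)) (hL t.1) hsum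
    exact (add_le_add (hΛle_of_cover ht₁) (hΛle_of_cover ht₂)).trans h12
  -- the content
  set c : Content Z :=
    { toFun := fun F => (Λ F.1).toNNReal
      mono' := fun F₁ F₂ h => ENNReal.toNNReal_mono (hΛne F₂.2) (hΛmono h)
      sup_le' := by
        intro F₁ F₂
        have key := hΛunion F₁.1 F₂.1 F₁.2 F₂.2
        have h1 := hΛne F₁.2
        have h2 := hΛne F₂.2
        rw [← ENNReal.toNNReal_add h1 h2]
        exact ENNReal.toNNReal_mono (ENNReal.add_ne_top.mpr ⟨h1, h2⟩) key
      sup_disjoint' := by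
        intro F₁ F₂ hdisj _ _
        have key := le_antisymm (hΛunion F₁.1 F₂.1 F₁.2 F₂.2)
          (hΛdisj F₁.1 F₂.1 F₁.2 F₂.2 hdisj)
        show (Λ (F₁.1 ∪ F₂.1)).toNNReal = _
        rw [key, ENNReal.toNNReal_add (hΛne F₁.2) (hΛne F₂.2)] } with hc
  have hc_coe : ∀ F : TopologicalSpace.Compacts Z, (c F : ℝ≥0∞) = Λ F.1 := by
    intro F
    show ((Λ F.1).toNNReal : ℝ≥0∞) = Λ F.1
    exact ENNReal.coe_toNNReal (hΛne F.2)
  -- the measure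
  set μ₀ := c.measure with hμ₀
  have hμ₀open : ∀ {G : Set Z}, (hG : IsOpen G) →
      μ₀ G = c.innerContent ⟨G, hG⟩ := by
    intro G hG
    rw [hμ₀, c.measure_apply hG.measurableSet, c.outerMeasure_of_isOpen G hG]
  have hopenle : ∀ G : Set Z, IsOpen G → μ₀ G ≤ atTop.liminf (fun j => γ (φ j) G) := by
    intro G hGo
    rw [hμ₀open hGo]
    refine iSup₂_le fun F hF => ?_
    obtain ⟨t, ht, htG⟩ := hbcov F.1 G F.2 hGo hF
    have h1 : (c F : ℝ≥0∞) ≤ L t := by rw [hc_coe]; exact hΛle_of_cover ht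
    have h2 : L t ≤ atTop.liminf (fun j => γ (φ j) G) := by
      rw [← (hL t).liminf_eq]
      exact liminf_le_liminf (Eventually.of_forall fun j => measure_mono htG)
    exact h1.trans h2
  have huniv : μ₀ univ = 1 := by
    refine le_antisymm ?_ ?_
    · rw [hμ₀open isOpen_univ]
      refine iSup₂_le fun F _ => ?_
      rw [hc_coe]
      exact hΛcompact_le F.2
    · have h1 : (1 : ℝ≥0∞) ≤ Λ K := le_iInf fun t => (hLone t.1 t.2).ge
      have h2 : Λ K ≤ μ₀ univ := by
        rw [hμ₀open isOpen_univ]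
        have := c.le_innerContent ⟨K, hK⟩ ⟨univ, isOpen_univ⟩ (subset_univ K)
        rwa [hc_coe] at this
      exact h1.trans h2
  have hKc : μ₀ Kᶜ = 0 := by
    refine le_antisymm ?_ (zero_le)
    refine (hopenle Kᶜ hK.isClosed.isOpen_compl).trans ?_
    simp [hsupp]
  haveI hμ₀prob : IsProbabilityMeasure μ₀ := ⟨huniv⟩
  -- weak convergence
  set P : ProbabilityMeasure Z := ⟨μ₀, hμ₀prob⟩ with hP
  set Ps : ℕ → ProbabilityMeasure Z := fun j => ⟨γ (φ j), hprob (φ j)⟩ with hPs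
  have h_opens : ∀ G : Set Z, IsOpen G → P G ≤ atTop.liminf (fun j => Ps j G) := by
    intro G hGo
    have aux : (ENNReal.ofNNReal (atTop.liminf (fun j => Ps j G))) =
        atTop.liminf (fun j => ((Ps j G : ℝ≥0) : ℝ≥0∞)) := by
      refine (Monotone.map_liminf_of_continuousAt (F := atTop) ENNReal.coe_mono
        (fun j => Ps j G) ENNReal.continuous_coe.continuousAt ?_ ?_)
      · exact IsBoundedUnder.isCoboundedUnder_ge ⟨1, by
          simp only [eventually_map, eventually_atTop]
          exact ⟨0, fun j _ => ProbabilityMeasure.apply_le_one _ _⟩⟩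
      · exact ⟨0, by simp⟩
    rw [← ENNReal.coe_le_coe, aux]
    have h1 : (P G : ℝ≥0∞) = μ₀ G := ProbabilityMeasure.ennreal_coeFn_eq_coeFn_toMeasure P G
    have h2 : ∀ j, ((Ps j G : ℝ≥0) : ℝ≥0∞) = γ (φ j) G := fun j =>
      ProbabilityMeasure.ennreal_coeFn_eq_coeFn_toMeasure (Ps j) G
    rw [h1]
    simp_rw [h2]
    exact hopenle G hGo
  have htends : atTop.Tendsto (fun j => Ps j) (𝓝 P) :=
    MeasureTheory.tendsto_of_forall_isOpen_le_liminf h_opens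
  refine ⟨μ₀, φ, hμ₀prob, hKc, hφ, ?_, ?_⟩
  · intro f
    exact ProbabilityMeasure.tendsto_iff_forall_integral_tendsto.mp htends f
  · intro f
    exact ProbabilityMeasure.tendsto_iff_forall_lintegral_tendsto.mp htends f

end Aux

section Aux2

/-- Truncated distance as a bounded continuous function. -/
def MDEaux.truncDist {W : Type*} [PseudoMetricSpace W] (M : ℝ) (hM : 0 ≤ M) :
    BoundedContinuousFunction (W × W) ℝ :=
  BoundedContinuousFunction.ofNormedAddCommGroup
    (fun p => min (dist p.1 p.2) M)
    (((continuous_fst.dist continuous_snd)).min continuous_const) M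
    (fun p => by
      rw [Real.norm_eq_abs, abs_le]
      constructor
      · have h1 : (0:ℝ) ≤ min (dist p.1 p.2) M := le_min dist_nonneg hM
        linarith
      · exact min_le_right _ _)

lemma MDEaux.truncDist_apply {W : Type*} [PseudoMetricSpace W] (M : ℝ) (hM : 0 ≤ M)
    (p : W × W) : MDEaux.truncDist M hM p = min (dist p.1 p.2) M := rfl

variable {Y : Type*} [MeasurableSpace Y]

lemma MDEaux.coupling_prob {τ : Measure (Y × Y)} {μ ν : Measure Y}
    (h : MDE.IsCoupling τ μ ν) (hμ : IsProbabilityMeasure μ) :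
    IsProbabilityMeasure τ := by
  constructor
  have : μ Set.univ = 1 := measure_univ
  rw [← h.1, Measure.map_apply measurable_fst MeasurableSet.univ] at this
  simpa using this

lemma MDEaux.coupling_supp {τ : Measure (Y × Y)} {μ ν : Measure Y}
    (h : MDE.IsCoupling τ μ ν) {s s' : Set Y} (hs : MeasurableSet s) (hs' : MeasurableSet s')
    (hμs : μ sᶜ = 0) (hνs' : ν s'ᶜ = 0) : τ (s ×ˢ s')ᶜ = 0 := by
  have hsub : (s ×ˢ s')ᶜ ⊆ (Prod.fst ⁻¹' sᶜ) ∪ (Prod.snd ⁻¹' s'ᶜ) := by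
    intro p hp
    simp only [Set.mem_compl_iff, Set.mem_prod, not_and_or] at hp
    rcases hp with hp | hp
    · exact Or.inl hp
    · exact Or.inr hp
  refine le_antisymm ?_ (zero_le)
  calc τ (s ×ˢ s')ᶜ ≤ τ ((Prod.fst ⁻¹' sᶜ) ∪ (Prod.snd ⁻¹' s'ᶜ)) := measure_mono hsub
    _ ≤ τ (Prod.fst ⁻¹' sᶜ) + τ (Prod.snd ⁻¹' s'ᶜ) := measure_union_le _ _
    _ = μ sᶜ + ν s'ᶜ := by
        rw [← Measure.map_apply measurable_fst hs.compl, ← Measure.map_apply measurable_snd hs'.compl,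
          h.1, h.2]
    _ = 0 := by rw [hμs, hνs']; ring

end Aux2

section OT

/-- Existence of an optimal transference plan between compactly supported
probability measures on `ℝⁿ`. -/
lemma MDEaux.exists_isOptPlan (n : ℕ) (μ ν : Measure (Euc n))
    (hμ : MDE.Pc μ) (hν : MDE.Pc ν) :
    ∃ γ : Measure (Euc n × Euc n), MDE.IsOptPlan γ μ ν := by
  classical
  obtain ⟨hμp, Rμ, hRμ, hμR⟩ := hμ
  obtain ⟨hνp, Rν, hRν, hνR⟩ := hν
  set R : ℝ := max Rμ Rν with hR
  have hR0 : 0 ≤ R := le_trans hRμ (le_max_left _ _)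
  set B : Set (Euc n) := closedBall 0 R with hB
  have hμB : μ Bᶜ = 0 := by
    refine le_antisymm (le_trans (measure_mono ?_) hμR.le) (zero_le)
    exact compl_subset_compl.mpr (closedBall_subset_closedBall (le_max_left _ _))
  have hνB : ν Bᶜ = 0 := by
    refine le_antisymm (le_trans (measure_mono ?_) hνR.le) (zero_le)
    exact compl_subset_compl.mpr (closedBall_subset_closedBall (le_max_right _ _))
  set KR : Set (Euc n × Euc n) := B ×ˢ B with hKR
  have hKRc : IsCompact KR := (isCompact_closedBall _ _).prod (isCompact_closedBall _ _)
  have hKRm : MeasurableSet B := measurableSet_closedBall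
  -- the cost set
  set S : Set ℝ := { r | ∃ τ : Measure (Euc n × Euc n), MDE.IsCoupling τ μ ν ∧
    r = ∫ p, dist p.1 p.2 ∂τ } with hS
  have hprod : MDE.IsCoupling (μ.prod ν) μ ν := by
    constructor
    · rw [Measure.map_fst_prod]; simp
    · rw [Measure.map_snd_prod]; simp
  have hSne : S.Nonempty := ⟨_, μ.prod ν, hprod, rfl⟩
  have hSbdd : BddBelow S := by
    refine ⟨0, fun r hr => ?_⟩
    obtain ⟨τ, -, rfl⟩ := hr
    exact integral_nonneg (fun p => dist_nonneg)
  set w : ℝ := sInf S with hw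
  have hWass : MDE.Wass μ ν = w := rfl
  -- minimizing sequence
  have hseq : ∀ k : ℕ, ∃ τ : Measure (Euc n × Euc n), MDE.IsCoupling τ μ ν ∧
      ∫ p, dist p.1 p.2 ∂τ < w + 1 / (k + 1) := by
    intro k
    have hlt : sInf S < w + 1 / (k + 1) := by
      rw [← hw]
      have : (0:ℝ) < 1 / (k+1) := by positivity
      linarith
    obtain ⟨r, hrS, hr⟩ := (csInf_lt_iff hSbdd hSne).mp hlt
    obtain ⟨τ, hτ, rfl⟩ := hrS
    exact ⟨τ, hτ, hr⟩
  choose τs hτs hcost using hseq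
  have hτprob : ∀ k, IsProbabilityMeasure (τs k) := fun k => MDEaux.coupling_prob (hτs k) hμp
  have hτsupp : ∀ k, τs k KRᶜ = 0 := fun k =>
    MDEaux.coupling_supp (hτs k) hKRm hKRm hμB hνB
  -- cost congruence on supported measures
  have hM0 : (0:ℝ) ≤ 2 * R := by linarith
  set fM := MDEaux.truncDist (W := Euc n) (2 * R) hM0 with hfM
  have hcong : ∀ τ : Measure (Euc n × Euc n), τ KRᶜ = 0 →
      ∫ p, dist p.1 p.2 ∂τ = ∫ p, fM p ∂τ := by
    intro τ hτ
    refine integral_congr_ae ?_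
    have hae : ∀ᵐ p ∂τ, p ∈ KR := by
      rw [ae_iff]
      exact hτ
    filter_upwards [hae] with p hp
    obtain ⟨h1, h2⟩ := hp
    rw [MDEaux.truncDist_apply]
    have hd : dist p.1 p.2 ≤ 2 * R := by
      have e1 : dist p.1 (0 : Euc n) ≤ R := mem_closedBall.mp h1
      have e2 : dist p.2 (0 : Euc n) ≤ R := mem_closedBall.mp h2
      calc dist p.1 p.2 ≤ dist p.1 0 + dist (0 : Euc n) p.2 := dist_triangle _ _ _
        _ ≤ R + R := add_le_add e1 (by rwa [dist_comm])
        _ = 2 * R := by ring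
    exact (min_eq_left hd).symm
  -- limit measure
  obtain ⟨μ₀, φ, hμ₀prob, hμ₀supp, hφ, hinteg, hlint⟩ :=
    MDEaux.exists_limit_measure KR hKRc τs hτprob hτsupp
  -- identify the marginals
  have hmarg : MDE.IsCoupling μ₀ μ ν := by
    constructor
    · haveI : IsProbabilityMeasure (μ₀.map Prod.fst) :=
        Measure.isProbabilityMeasure_map measurable_fst.aemeasurable
      refine ext_of_forall_lintegral_eq_of_IsFiniteMeasure (fun f => ?_)
      set g := f.compContinuous (⟨Prod.fst, continuous_fst⟩ :
        C(Euc n × Euc n, Euc n)) with hg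
      have hgap : ∀ p : Euc n × Euc n, g p = f p.1 := fun p => rfl
      have h1 : ∫⁻ x, (f x : ℝ≥0∞) ∂(μ₀.map Prod.fst) = ∫⁻ p, (g p : ℝ≥0∞) ∂μ₀ := by
        rw [lintegral_map (by exact ENNReal.continuous_coe.comp f.continuous |>.measurable)
          measurable_fst]
        rfl
      have h2 : ∀ j, ∫⁻ p, (g p : ℝ≥0∞) ∂(τs (φ j)) = ∫⁻ x, (f x : ℝ≥0∞) ∂μ := by
        intro j
        rw [← (hτs (φ j)).1,
          lintegral_map (by exact ENNReal.continuous_coe.comp f.continuous |>.measurable)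
          measurable_fst]
        rfl
      have h3 := hlint g
      simp only [h2] at h3
      have h4 : ∫⁻ p, (g p : ℝ≥0∞) ∂μ₀ = ∫⁻ x, (f x : ℝ≥0∞) ∂μ :=
        tendsto_nhds_unique h3 tendsto_const_nhds
      rw [h1, h4]
    · haveI : IsProbabilityMeasure (μ₀.map Prod.snd) :=
        Measure.isProbabilityMeasure_map measurable_snd.aemeasurable
      refine ext_of_forall_lintegral_eq_of_IsFiniteMeasure (fun f => ?_)
      set g := f.compContinuous (⟨Prod.snd, continuous_snd⟩ :
        C(Euc n × Euc n, Euc n)) with hg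
      have h1 : ∫⁻ x, (f x : ℝ≥0∞) ∂(μ₀.map Prod.snd) = ∫⁻ p, (g p : ℝ≥0∞) ∂μ₀ := by
        rw [lintegral_map (by exact ENNReal.continuous_coe.comp f.continuous |>.measurable)
          measurable_snd]
        rfl
      have h2 : ∀ j, ∫⁻ p, (g p : ℝ≥0∞) ∂(τs (φ j)) = ∫⁻ x, (f x : ℝ≥0∞) ∂ν := by
        intro j
        rw [← (hτs (φ j)).2,
          lintegral_map (by exact ENNReal.continuous_coe.comp f.continuous |>.measurable)
          measurable_snd]
        rfl
      have h3 := hlint g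
      simp only [h2] at h3
      have h4 : ∫⁻ p, (g p : ℝ≥0∞) ∂μ₀ = ∫⁻ x, (f x : ℝ≥0∞) ∂ν :=
        tendsto_nhds_unique h3 tendsto_const_nhds
      rw [h1, h4]
  -- cost converges to w
  have hcseq : Tendsto (fun k => ∫ p, dist p.1 p.2 ∂(τs k)) atTop (𝓝 w) := by
    have hub : ∀ k : ℕ, ∫ p, dist p.1 p.2 ∂(τs k) ≤ w + 1 / (k + 1) := fun k => (hcost k).le
    have hlb : ∀ k : ℕ, w ≤ ∫ p, dist p.1 p.2 ∂(τs k) := fun k =>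
      csInf_le hSbdd ⟨τs k, hτs k, rfl⟩
    have haux : Tendsto (fun k : ℕ => w + 1 / ((k : ℝ) + 1)) atTop (𝓝 (w + 0)) :=
      tendsto_const_nhds.add tendsto_one_div_add_atTop_nhds_zero_nat
    rw [add_zero] at haux
    exact tendsto_of_tendsto_of_tendsto_of_le_of_le tendsto_const_nhds haux hlb hub
  have hccost : Tendsto (fun j => ∫ p, fM p ∂(τs (φ j))) atTop (𝓝 w) := by
    have : (fun j => ∫ p, fM p ∂(τs (φ j))) = fun j => ∫ p, dist p.1 p.2 ∂(τs (φ j)) := by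
      funext j
      exact (hcong _ (hτsupp (φ j))).symm
    rw [this]
    exact hcseq.comp hφ.tendsto_atTop
  have hcost₀ : ∫ p, dist p.1 p.2 ∂μ₀ = w := by
    have h1 := hinteg fM
    have h2 : ∫ p, fM p ∂μ₀ = w := tendsto_nhds_unique h1 hccost
    rw [hcong μ₀ hμ₀supp, h2]
  exact ⟨μ₀, hmarg, by rw [hcost₀, hWass]⟩

end OT


instance MDEaux.borelDouble (n : ℕ) : BorelSpace ((Euc n × Euc n) × Euc n × Euc n) :=
  Prod.borelSpace

lemma MDEaux.exists_lift (n : ℕ) (W₁ W₂ : Measure (Euc n × Euc n))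
    [IsFiniteMeasure W₁] [IsFiniteMeasure W₂]
    (γ : Measure (Euc n × Euc n)) [IsFiniteMeasure γ]
    (hγ1 : γ.map Prod.fst = W₁.map Prod.fst) (hγ2 : γ.map Prod.snd = W₂.map Prod.fst) :
    ∃ T : Measure ((Euc n × Euc n) × (Euc n × Euc n)),
      (T.map Prod.fst = W₁ ∧ T.map Prod.snd = W₂) ∧
      T.map (fun p => (p.1.1, p.2.1)) = γ := by
  classical
  set X := Euc n
  set κ : Kernel X X := W₁.condKernel with hκ
  set η : Kernel X X := W₂.condKernel with hη
  set ζ : Kernel (X × X) (X × X) :=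
    (κ.comap Prod.fst measurable_fst).prod (η.comap Prod.snd measurable_snd) with hζ
  haveI : IsMarkovKernel ζ := by infer_instance
  set T0 : Measure ((X × X) × (X × X)) := γ.compProd ζ with hT0
  have hemeas : Measurable (fun q : (X × X) × (X × X) => ((q.1.1, q.2.1), (q.1.2, q.2.2))) := by
    fun_prop
  set T : Measure ((X × X) × (X × X)) := T0.map (fun q => ((q.1.1, q.2.1), (q.1.2, q.2.2))) with hT
  have hζ_apply_fst : ∀ (a : X × X) {s : Set (X × X)}, MeasurableSet s →
      ζ a {p : X × X | (a.1, p.1) ∈ s} = κ a.1 (Prod.mk a.1 ⁻¹' s) := by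
    intro a s hs
    have hset : {p : X × X | (a.1, p.1) ∈ s} = (Prod.mk a.1 ⁻¹' s) ×ˢ univ := by
      ext p; simp [Set.mem_prod]
    rw [hζ, Kernel.prod_apply, hset, Measure.prod_prod]
    simp [Kernel.comap_apply]
  have hζ_apply_snd : ∀ (a : X × X) {s : Set (X × X)}, MeasurableSet s →
      ζ a {p : X × X | (a.2, p.2) ∈ s} = η a.2 (Prod.mk a.2 ⁻¹' s) := by
    intro a s hs
    have hset : {p : X × X | (a.2, p.2) ∈ s} = univ ×ˢ (Prod.mk a.2 ⁻¹' s) := by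
      ext p; simp [Set.mem_prod]
    rw [hζ, Kernel.prod_apply, hset, Measure.prod_prod]
    simp [Kernel.comap_apply]
  refine ⟨T, ⟨?_, ?_⟩, ?_⟩
  · -- first marginal is W₁
    rw [hT, Measure.map_map measurable_fst hemeas]
    have hfun : (Prod.fst ∘ fun q : (X × X) × (X × X) => ((q.1.1, q.2.1), (q.1.2, q.2.2)))
        = fun q => (q.1.1, q.2.1) := rfl
    rw [hfun]
    have key : T0.map (fun q : (X × X) × (X × X) => (q.1.1, q.2.1))
        = (γ.map Prod.fst) ⊗ₘ κ := by
      refine Measure.ext fun s hs => ?_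
      have hmeas2 : Measurable (fun q : (X × X) × (X × X) => (q.1.1, q.2.1)) := by fun_prop
      rw [Measure.map_apply hmeas2 hs, hT0, Measure.compProd_apply (hmeas2 hs),
        Measure.compProd_apply hs,
        lintegral_map (Kernel.measurable_kernel_prodMk_left hs) measurable_fst]
      refine lintegral_congr fun a => ?_
      have : (Prod.mk a ⁻¹' ((fun q : (X × X) × (X × X) => (q.1.1, q.2.1)) ⁻¹' s))
          = {p : X × X | (a.1, p.1) ∈ s} := by ext p; simp
      rw [this, hζ_apply_fst a hs]
    rw [key, hγ1]
    have : W₁.map Prod.fst = W₁.fst := rfl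
    rw [this, hκ, Measure.disintegrate]
  · -- second marginal is W₂
    rw [hT, Measure.map_map measurable_snd hemeas]
    have hfun : (Prod.snd ∘ fun q : (X × X) × (X × X) => ((q.1.1, q.2.1), (q.1.2, q.2.2)))
        = fun q => (q.1.2, q.2.2) := rfl
    rw [hfun]
    have key : T0.map (fun q : (X × X) × (X × X) => (q.1.2, q.2.2))
        = (γ.map Prod.snd) ⊗ₘ η := by
      refine Measure.ext fun s hs => ?_
      have hmeas2 : Measurable (fun q : (X × X) × (X × X) => (q.1.2, q.2.2)) := by fun_prop
      rw [Measure.map_apply hmeas2 hs, hT0, Measure.compProd_apply (hmeas2 hs),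
        Measure.compProd_apply hs,
        lintegral_map (Kernel.measurable_kernel_prodMk_left hs) measurable_snd]
      refine lintegral_congr fun a => ?_
      have : (Prod.mk a ⁻¹' ((fun q : (X × X) × (X × X) => (q.1.2, q.2.2)) ⁻¹' s))
          = {p : X × X | (a.2, p.2) ∈ s} := by ext p; simp
      rw [this, hζ_apply_snd a hs]
    rw [key, hγ2]
    have : W₂.map Prod.fst = W₂.fst := rfl
    rw [this, hη, Measure.disintegrate]
  · -- base marginal is γ
    have hmeas3 : Measurable (fun p : (X × X) × (X × X) => (p.1.1, p.2.1)) := by fun_prop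
    rw [hT, Measure.map_map hmeas3 hemeas]
    have hfun : ((fun p : (X × X) × (X × X) => (p.1.1, p.2.1)) ∘
        fun q : (X × X) × (X × X) => ((q.1.1, q.2.1), (q.1.2, q.2.2))) = Prod.fst := by
      funext q; rfl
    rw [hfun]
    have : T0.map Prod.fst = T0.fst := rfl
    rw [this, hT0, Measure.fst_compProd]


section Helpers

lemma MDEaux.prob_of_map_fst {A : Type*} [MeasurableSpace A] {W : Measure (A × A)}
    {μ : Measure A} (h : W.map Prod.fst = μ) [IsProbabilityMeasure μ] :
    IsProbabilityMeasure W := by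
  constructor
  have : μ Set.univ = 1 := measure_univ
  rw [← h, Measure.map_apply measurable_fst MeasurableSet.univ] at this
  simpa using this

lemma MDEaux.Wass_nonneg {Y : Type*} [MeasurableSpace Y] [PseudoMetricSpace Y]
    (μ ν : Measure Y) [IsProbabilityMeasure μ] [IsProbabilityMeasure ν] :
    0 ≤ MDE.Wass μ ν := by
  refine le_csInf ?_ ?_
  · refine ⟨∫ p, dist p.1 p.2 ∂(μ.prod ν), μ.prod ν, ⟨?_, ?_⟩, rfl⟩
    · rw [Measure.map_fst_prod]; simp
    · rw [Measure.map_snd_prod]; simp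
  · rintro r ⟨τ, -, rfl⟩
    exact integral_nonneg (fun p => dist_nonneg)

lemma MDEaux.Wass_le_cost {Y : Type*} [MeasurableSpace Y] [PseudoMetricSpace Y]
    {μ ν : Measure Y} {τ : Measure (Y × Y)} (h : MDE.IsCoupling τ μ ν) :
    MDE.Wass μ ν ≤ ∫ p, dist p.1 p.2 ∂τ := by
  refine csInf_le ⟨0, ?_⟩ ⟨τ, h, rfl⟩
  rintro r ⟨τ', -, rfl⟩
  exact integral_nonneg (fun p => dist_nonneg)

end Helpers

/-- Lemma 4.2: `W^{Tℝⁿ}(V[μ],V[ν]) ≤ 𝒲(V[μ],V[ν]) + W(μ,ν)`; in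
particular (H3) implies local Lipschitz continuity of `V` for the Wasserstein metrics. -/
theorem wasserstein_tangent_le (n : ℕ) (V : PVF (Euc n)) (hV : IsPVF V) :
    (∀ μ ν : Measure (Euc n), Pc μ → Pc ν →
      Wass (V μ) (V ν) ≤ calW (V μ) (V ν) + Wass μ ν) ∧
    (H3 V → ∀ R > (0:ℝ), ∃ K > (0:ℝ), ∀ μ ν : Measure (Euc n), Pc μ → Pc ν →
      SuppIn μ (closedBall 0 R) → SuppIn ν (closedBall 0 R) →
      Wass (V μ) (V ν) ≤ K * Wass μ ν) := by
  classical
  have main : ∀ μ ν : Measure (Euc n), Pc μ → Pc ν →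
      Wass (V μ) (V ν) ≤ calW (V μ) (V ν) + Wass μ ν := by
    intro μ ν hμ hν
    haveI hμp : IsProbabilityMeasure μ := hμ.1
    haveI hνp : IsProbabilityMeasure ν := hν.1
    obtain ⟨-, Rμ, hRμ, hμR⟩ := hμ
    obtain ⟨-, Rν, hRν, hνR⟩ := hν
    set R : ℝ := max Rμ Rν with hRdef
    have hR0 : 0 ≤ R := le_trans hRμ (le_max_left _ _)
    set B : Set (Euc n) := closedBall 0 R with hBdef
    have hμB : μ Bᶜ = 0 := by
      refine le_antisymm (le_trans (measure_mono ?_) hμR.le) (zero_le)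
      exact compl_subset_compl.mpr (closedBall_subset_closedBall (le_max_left _ _))
    have hνB : ν Bᶜ = 0 := by
      refine le_antisymm (le_trans (measure_mono ?_) hνR.le) (zero_le)
      exact compl_subset_compl.mpr (closedBall_subset_closedBall (le_max_right _ _))
    have hBm : MeasurableSet B := measurableSet_closedBall
    have hVμfst : (V μ).map Prod.fst = μ := hV μ ⟨hμp, Rμ, hRμ, hμR⟩
    have hVνfst : (V ν).map Prod.fst = ν := hV ν ⟨hνp, Rν, hRν, hνR⟩
    haveI hVμp : IsProbabilityMeasure (V μ) := MDEaux.prob_of_map_fst hVμfst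
    haveI hVνp : IsProbabilityMeasure (V ν) := MDEaux.prob_of_map_fst hVνfst
    set S : Set ℝ := { r | ∃ T : Measure (((Euc n) × (Euc n)) × ((Euc n) × (Euc n))),
      IsCoupling T (V μ) (V ν) ∧
      IsOptPlan (T.map (fun p => (p.1.1, p.2.1))) ((V μ).map Prod.fst) ((V ν).map Prod.fst) ∧
      r = ∫ p, dist p.1.2 p.2.2 ∂T } with hSdef
    have hcalW : calW (V μ) (V ν) = sInf S := rfl
    have hmeas13 : Measurable (fun p : ((Euc n) × (Euc n)) × ((Euc n) × (Euc n)) =>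
        (p.1.1, p.2.1)) := by fun_prop
    -- every element of S gives the bound
    have hbound : ∀ r ∈ S, Wass (V μ) (V ν) ≤ r + Wass μ ν := by
      rintro r ⟨T, hTc, hTopt, rfl⟩
      rw [hVμfst, hVνfst] at hTopt
      haveI hTp : IsProbabilityMeasure T := MDEaux.prob_of_map_fst hTc.1
      -- the base marginal is supported in B ×ˢ B
      have hbase_supp : T ((fun p : ((Euc n) × (Euc n)) × ((Euc n) × (Euc n)) =>
          (p.1.1, p.2.1)) ⁻¹' (B ×ˢ B)ᶜ) = 0 := by
        rw [← Measure.map_apply hmeas13 (hBm.prod hBm).compl]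
        exact MDEaux.coupling_supp hTopt.1 hBm hBm hμB hνB
      have hbase_ae : ∀ᵐ p ∂T, dist p.1.1 p.2.1 ≤ 2 * R := by
        rw [ae_iff]
        refine le_antisymm (le_trans (measure_mono ?_) hbase_supp.le) (zero_le)
        intro p hp
        simp only [Set.mem_setOf_eq, not_le] at hp
        simp only [Set.mem_preimage, Set.mem_compl_iff, Set.mem_prod, mem_closedBall, not_and_or,
          not_le]
        by_contra hcon
        push_neg at hcon
        obtain ⟨h1, h2⟩ := hcon
        have : dist p.1.1 p.2.1 ≤ 2 * R := by
          calc dist p.1.1 p.2.1 ≤ dist p.1.1 0 + dist (0 : Euc n) p.2.1 := dist_triangle _ _ _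
            _ ≤ R + R := add_le_add h1 (by rwa [dist_comm])
            _ = 2 * R := by ring
        linarith
      have hbase_int : Integrable (fun p : ((Euc n) × (Euc n)) × ((Euc n) × (Euc n)) =>
          dist p.1.1 p.2.1) T := by
        refine Integrable.mono' (integrable_const (2 * R)) ?_ ?_
        · exact ((continuous_dist.comp ((continuous_fst.comp continuous_fst).prodMk
            (continuous_fst.comp continuous_snd)))).aestronglyMeasurable
        · filter_upwards [hbase_ae] with p hp
          rwa [Real.norm_of_nonneg dist_nonneg]
      have hbase_eq : ∫ p, dist p.1.1 p.2.1 ∂T = Wass μ ν := by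
        have h := integral_map (μ := T)
          (φ := fun p : ((Euc n) × (Euc n)) × ((Euc n) × (Euc n)) => (p.1.1, p.2.1))
          (f := fun q : (Euc n) × (Euc n) => dist q.1 q.2)
          hmeas13.aemeasurable
          ((continuous_dist.comp
            (continuous_fst.prodMk continuous_snd)).aestronglyMeasurable)
        rw [← hTopt.2]
        exact h.symm
      have hWnn : 0 ≤ Wass μ ν := MDEaux.Wass_nonneg μ ν
      have hdist_eq : ∀ p : ((Euc n) × (Euc n)) × ((Euc n) × (Euc n)),
          dist p.1 p.2 = max (dist p.1.1 p.2.1) (dist p.1.2 p.2.2) := by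
        intro p
        rw [Prod.dist_eq]
      by_cases hfib : Integrable (fun p : ((Euc n) × (Euc n)) × ((Euc n) × (Euc n)) =>
          dist p.1.2 p.2.2) T
      · have hdist_int : Integrable (fun p : ((Euc n) × (Euc n)) × ((Euc n) × (Euc n)) =>
            dist p.1 p.2) T := by
          refine Integrable.mono' (hbase_int.add hfib) ?_ ?_
          · exact continuous_dist.comp
              (continuous_fst.prodMk continuous_snd) |>.aestronglyMeasurable
          · refine Eventually.of_forall fun p => ?_
            rw [Real.norm_of_nonneg dist_nonneg, hdist_eq]
            exact max_le (le_add_of_nonneg_right dist_nonneg)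
              (le_add_of_nonneg_left dist_nonneg)
        have step1 : Wass (V μ) (V ν) ≤ ∫ p, dist p.1 p.2 ∂T := MDEaux.Wass_le_cost hTc
        have step2 : ∫ p, dist p.1 p.2 ∂T ≤
            ∫ p, (dist p.1.1 p.2.1 + dist p.1.2 p.2.2) ∂T := by
          refine integral_mono hdist_int (hbase_int.add hfib) fun p => ?_
          rw [hdist_eq]
          exact max_le (le_add_of_nonneg_right dist_nonneg) (le_add_of_nonneg_left dist_nonneg)
        have step3 : ∫ p, (dist p.1.1 p.2.1 + dist p.1.2 p.2.2) ∂T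
            = Wass μ ν + ∫ p, dist p.1.2 p.2.2 ∂T := by
          rw [integral_add hbase_int hfib, hbase_eq]
        linarith
      · have hdist_not : ¬ Integrable (fun p : ((Euc n) × (Euc n)) × ((Euc n) × (Euc n)) =>
            dist p.1 p.2) T := by
          intro hcon
          refine hfib (Integrable.mono' hcon ?_ ?_)
          · exact ((continuous_dist.comp ((continuous_snd.comp continuous_fst).prodMk
              (continuous_snd.comp continuous_snd)))).aestronglyMeasurable
          · refine Eventually.of_forall fun p => ?_
            rw [Real.norm_of_nonneg dist_nonneg, hdist_eq]
            exact le_max_right _ _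
        have h0 : ∫ p, dist p.1 p.2 ∂T = 0 := integral_undef hdist_not
        have h0' : ∫ p, dist p.1.2 p.2.2 ∂T = 0 := integral_undef hfib
        have step1 : Wass (V μ) (V ν) ≤ ∫ p, dist p.1 p.2 ∂T := MDEaux.Wass_le_cost hTc
        rw [h0] at step1
        rw [h0']
        linarith
    -- S is nonempty
    have hSne : S.Nonempty := by
      obtain ⟨γopt, hγopt⟩ := MDEaux.exists_isOptPlan n μ ν ⟨hμp, Rμ, hRμ, hμR⟩ ⟨hνp, Rν, hRν, hνR⟩
      haveI : IsProbabilityMeasure γopt := MDEaux.coupling_prob hγopt.1 hμp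
      obtain ⟨T, ⟨hT1, hT2⟩, hTf⟩ := MDEaux.exists_lift n (V μ) (V ν) γopt
        (by rw [hVμfst]; exact hγopt.1.1) (by rw [hVνfst]; exact hγopt.1.2)
      refine ⟨∫ p, dist p.1.2 p.2.2 ∂T, T, ⟨hT1, hT2⟩, ?_, rfl⟩
      rw [hVμfst, hVνfst, hTf]
      exact hγopt
    -- conclude
    have hle : Wass (V μ) (V ν) - Wass μ ν ≤ sInf S := by
      refine le_csInf hSne fun r hr => ?_
      have := hbound r hr
      linarith
    rw [hcalW]
    linarith
  refine ⟨main, ?_⟩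
  intro h3 R hR
  obtain ⟨K, hK, hKle⟩ := h3 R hR
  refine ⟨K + 1, by linarith, fun μ ν hμ hν hμR hνR => ?_⟩
  haveI := hμ.1
  haveI := hν.1
  have h1 := main μ ν hμ hν
  have h2 := hKle μ ν hμ hν hμR hνR
  have h3' : 0 ≤ Wass μ ν := MDEaux.Wass_nonneg μ ν
  nlinarith


end
end

section
/- The quantity d(V₁,V₂) = inf { ∫ (|x−y| + |v−w|) dT : T ∈ P(V₁,V₂), π₁₃#T ∈ P^{opt}(μ₁,μ₂) } fails the triangle inequality: for the measures on Tℝ² given by V₁ = ½δ_{((0,0),(1,0))} + ½δ_{((1,0),(3,0))}, V₂ = ½δ_{((0,1),(1,0))} + ½δ_{((1,−1),(3,0))}, V₃ = ½δ_{((1,1),(1,0))} + ½δ_{((0,−1),(3,0))}, one has d(V₁,V₂) = 1, d(V₂,V₃) = 1, but d(V₁,V₃) = 3. -/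
open MeasureTheory Metric Set Filter
open scoped NNReal ENNReal Topology

noncomputable section

open MDE

namespace MDE

/-- A point of the Euclidean plane. -/
def pt (a b : ℝ) : Euc 2 := (WithLp.equiv 2 (Fin 2 → ℝ)).symm ![a, b]

/-- The candidate distance `d(V₁,V₂)`: infimum of `∫ (|x−y| + |v−w|) dT` over couplings `T`
of `V₁, V₂` whose projection on the bases is an optimal transference plan. -/
def dTri (W₁ W₂ : Measure (Euc 2 × Euc 2)) : ℝ :=
  sInf { r | ∃ T : Measure ((Euc 2 × Euc 2) × (Euc 2 × Euc 2)), IsCoupling T W₁ W₂ ∧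
    IsOptPlan (T.map (fun p => (p.1.1, p.2.1))) (W₁.map Prod.fst) (W₂.map Prod.fst) ∧
    r = ∫ p, (dist p.1.1 p.2.1 + dist p.1.2 p.2.2) ∂T }

end MDE

namespace MDEProof

variable {α : Type*} [MeasurableSpace α] [MeasurableSingletonClass α]
set_option linter.unusedSectionVars false

abbrev combo (p q : α) : Measure α :=
  (1/2 : ℝ≥0∞) • Measure.dirac p + (1/2 : ℝ≥0∞) • Measure.dirac q

lemma integrable_dirac' (f : α → ℝ) (p : α) : Integrable f (Measure.dirac p) :=
  (integrable_const (f p)).congr (by simp [Filter.EventuallyEq, MeasureTheory.ae_dirac_eq])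

lemma integrable_combo (f : α → ℝ) (p q : α) : Integrable f (combo p q) := by
  refine Integrable.add_measure ?_ ?_ <;>
    exact (integrable_smul_measure (by norm_num) (by norm_num)).2 (integrable_dirac' f _)

lemma integral_combo (f : α → ℝ) (p q : α) :
    ∫ x, f x ∂(combo p q) = (f p + f q) / 2 := by
  rw [integral_add_measure
      ((integrable_smul_measure (by norm_num) (by norm_num)).2 (integrable_dirac' f p))
      ((integrable_smul_measure (by norm_num) (by norm_num)).2 (integrable_dirac' f q)),
    integral_smul_measure, integral_smul_measure, integral_dirac, integral_dirac]
  norm_num [ENNReal.toReal_div]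
  ring

lemma combo_univ (p q : α) : combo p q Set.univ = 1 := by
  simp [Measure.add_apply, Measure.smul_apply]
  exact ENNReal.inv_two_add_inv_two

lemma isProb_combo (p q : α) : IsProbabilityMeasure (combo p q) := ⟨combo_univ p q⟩

lemma map_combo {β : Type*} [MeasurableSpace β] {f : α → β} (hf : Measurable f) (p q : α) :
    (combo p q).map f = combo (f p) (f q) := by
  rw [Measure.map_add _ _ hf, Measure.map_smul, Measure.map_smul,
    Measure.map_dirac' hf, Measure.map_dirac' hf]

lemma mem_pair_measurable (p q : α) : MeasurableSet {x : α | x = p ∨ x = q} := by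
  have : {x : α | x = p ∨ x = q} = {p} ∪ {q} := by ext x; simp; tauto
  rw [this]
  exact (measurableSet_singleton p).union (measurableSet_singleton q)

lemma ae_combo (p q : α) : ∀ᵐ x ∂(combo p q), x = p ∨ x = q := by
  rw [ae_iff]
  have hm : MeasurableSet {x : α | ¬(x = p ∨ x = q)} := (mem_pair_measurable p q).compl
  simp only [Measure.add_apply, Measure.smul_apply]
  rw [Measure.dirac_apply' _ hm, Measure.dirac_apply' _ hm]
  simp

lemma isProb_of_map_fst {β γ : Type*} [MeasurableSpace β] [MeasurableSpace γ]
    {τ : Measure (β × γ)} {μ : Measure β} [IsProbabilityMeasure μ]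
    (h : τ.map Prod.fst = μ) : IsProbabilityMeasure τ := by
  constructor
  have h2 := congrArg (fun m : Measure β => m Set.univ) h
  simp only [Measure.map_apply measurable_fst MeasurableSet.univ, Set.preimage_univ] at h2
  rw [h2, measure_univ]

lemma ae_fst_pair {β γ : Type*} [MeasurableSpace β] [MeasurableSingletonClass β]
    [MeasurableSpace γ] {τ : Measure (β × γ)} {p q : β} (h : τ.map Prod.fst = combo p q) :
    ∀ᵐ z ∂τ, z.1 = p ∨ z.1 = q := by
  have h2 := ae_combo p q
  rw [← h, ae_map_iff measurable_fst.aemeasurable (mem_pair_measurable p q)] at h2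
  exact h2

lemma ae_snd_pair {β γ : Type*} [MeasurableSpace β] [MeasurableSpace γ]
    [MeasurableSingletonClass γ] {τ : Measure (β × γ)} {p q : γ} (h : τ.map Prod.snd = combo p q) :
    ∀ᵐ z ∂τ, z.2 = p ∨ z.2 = q := by
  have h2 := ae_combo p q
  rw [← h, ae_map_iff measurable_snd.aemeasurable (mem_pair_measurable p q)] at h2
  exact h2

lemma ae_quad {β γ : Type*} [MeasurableSpace β] [MeasurableSpace γ]
    [MeasurableSingletonClass β] [MeasurableSingletonClass γ]
    {τ : Measure (β × γ)} {p q : β} {p' q' : γ}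
    (h1 : τ.map Prod.fst = combo p q) (h2 : τ.map Prod.snd = combo p' q') :
    ∀ᵐ z ∂τ, z = (p, p') ∨ z = (p, q') ∨ z = (q, p') ∨ z = (q, q') := by
  filter_upwards [ae_fst_pair h1, ae_snd_pair h2] with z hz1 hz2
  rcases hz1 with h | h <;> rcases hz2 with h' | h' <;> simp [Prod.ext_iff, h, h']

lemma integrable_of_quad {β : Type*} [MeasurableSpace β] {τ : Measure β} [IsProbabilityMeasure τ]
    {f : β → ℝ} (hf : AEStronglyMeasurable f τ) {p q r s : β}
    (h : ∀ᵐ z ∂τ, z = p ∨ z = q ∨ z = r ∨ z = s) : Integrable f τ := by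
  refine (integrable_const (max (max ‖f p‖ ‖f q‖) (max ‖f r‖ ‖f s‖))).mono' hf ?_
  filter_upwards [h] with z hz
  rcases hz with h | h | h | h <;> subst h
  · exact le_max_of_le_left (le_max_left _ _)
  · exact le_max_of_le_left (le_max_right _ _)
  · exact le_max_of_le_right (le_max_left _ _)
  · exact le_max_of_le_right (le_max_right _ _)

section WassLemmas

open MDE

variable {α : Type*} [MeasurableSpace α] [PseudoMetricSpace α] [MeasurableSingletonClass α]
  [OpensMeasurableSpace α] [SecondCountableTopology α]

lemma min_dist_lip (c₁ c₂ x y : α) :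
    min (dist x c₁) (dist x c₂) - min (dist y c₁) (dist y c₂) ≤ dist x y := by
  rcases le_total (dist y c₁) (dist y c₂) with h | h
  · rw [min_eq_left h]
    have h1 : min (dist x c₁) (dist x c₂) ≤ dist x c₁ := min_le_left _ _
    have h2 := dist_triangle x y c₁
    linarith
  · rw [min_eq_right h]
    have h1 : min (dist x c₁) (dist x c₂) ≤ dist x c₂ := min_le_right _ _
    have h2 := dist_triangle x y c₂
    linarith

lemma wass_bddBelow (μ ν : Measure α) :
    BddBelow {r | ∃ τ : Measure (α × α), IsCoupling τ μ ν ∧ r = ∫ p, dist p.1 p.2 ∂τ} := by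
  refine ⟨0, ?_⟩
  rintro r ⟨τ, -, rfl⟩
  exact integral_nonneg fun z => dist_nonneg

lemma wass_eq {p q p' q' : α} (u : α → ℝ) (hc : Continuous u)
    (hL : ∀ x y, u x - u y ≤ dist x y) {D : ℝ}
    (h1 : (u p + u q) / 2 - (u p' + u q') / 2 = D)
    (h2 : (dist p p' + dist q q') / 2 = D) :
    Wass (combo p q) (combo p' q') = D := by
  have hmem : D ∈ {r | ∃ τ : Measure (α × α), IsCoupling τ (combo p q) (combo p' q') ∧
      r = ∫ z, dist z.1 z.2 ∂τ} := by
    refine ⟨combo (p, p') (q, q'),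
      ⟨map_combo measurable_fst _ _, map_combo measurable_snd _ _⟩, ?_⟩
    rw [integral_combo (fun z : α × α => dist z.1 z.2)]
    exact h2.symm
  refine le_antisymm (csInf_le (wass_bddBelow _ _) hmem) (le_csInf ⟨D, hmem⟩ ?_)
  rintro r ⟨τ, ⟨hτ1, hτ2⟩, rfl⟩
  haveI : IsProbabilityMeasure (combo p q) := isProb_combo p q
  haveI : IsProbabilityMeasure τ := isProb_of_map_fst hτ1
  have hquad := ae_quad hτ1 hτ2
  have hcd : Continuous (fun z : α × α => dist z.1 z.2) := continuous_fst.dist continuous_snd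
  have hid : Integrable (fun z : α × α => dist z.1 z.2) τ :=
    integrable_of_quad hcd.aestronglyMeasurable hquad
  have hiu1 : Integrable (fun z : α × α => u z.1) τ :=
    integrable_of_quad (hc.comp continuous_fst).aestronglyMeasurable hquad
  have hiu2 : Integrable (fun z : α × α => u z.2) τ :=
    integrable_of_quad (hc.comp continuous_snd).aestronglyMeasurable hquad
  have key : ∫ z : α × α, (u z.1 - u z.2) ∂τ ≤ ∫ z : α × α, dist z.1 z.2 ∂τ :=
    integral_mono (hiu1.sub hiu2) hid fun z => hL _ _
  have e1 : ∫ z : α × α, u z.1 ∂τ = (u p + u q) / 2 := by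
    have := integral_map (μ := τ) measurable_fst.aemeasurable
      (f := u) hc.aestronglyMeasurable
    rw [hτ1, integral_combo] at this
    exact this.symm
  have e2 : ∫ z : α × α, u z.2 ∂τ = (u p' + u q') / 2 := by
    have := integral_map (μ := τ) measurable_snd.aemeasurable
      (f := u) hc.aestronglyMeasurable
    rw [hτ2, integral_combo] at this
    exact this.symm
  rw [integral_sub hiu1 hiu2, e1, e2, h1] at key
  exact key

end WassLemmas

section DTriLemmas

open MDE

abbrev TE := Euc 2 × Euc 2

instance : MeasurableSingletonClass (TE × TE) := Prod.instMeasurableSingletonClass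
instance : OpensMeasurableSpace (TE × TE) := Prod.opensMeasurableSpace

lemma measurable_pi13 : Measurable (fun z : TE × TE => (z.1.1, z.2.1)) :=
  (measurable_fst.comp measurable_fst).prodMk (measurable_fst.comp measurable_snd)

lemma continuous_cost : Continuous (fun z : TE × TE => dist z.1.1 z.2.1 + dist z.1.2 z.2.2) := by
  fun_prop

lemma dTri_bddBelow (W₁ W₂ : Measure TE) :
    BddBelow {r | ∃ T : Measure (TE × TE), IsCoupling T W₁ W₂ ∧
      IsOptPlan (T.map (fun p => (p.1.1, p.2.1))) (W₁.map Prod.fst) (W₂.map Prod.fst) ∧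
      r = ∫ p, (dist p.1.1 p.2.1 + dist p.1.2 p.2.2) ∂T} := by
  refine ⟨0, ?_⟩
  rintro r ⟨T, -, -, rfl⟩
  exact integral_nonneg fun z => add_nonneg dist_nonneg dist_nonneg

/-- Generic lower bound for elements of the `dTri` set:
if the cost dominates `A + κ * (base dist - u ∘ π₁ + u ∘ π₃)` on the support,
and the base potential `u` is "tight", then every element is `≥ A`. -/
lemma dTri_lb {p q p' q' : Euc 2} {v w v' w' : Euc 2} {D A κ : ℝ}
    (u : Euc 2 → ℝ) (hc : Continuous u)
    (hW : Wass (combo p q) (combo p' q') = D)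
    (hu : (u p + u q) / 2 - (u p' + u q') / 2 = D)
    (hpt : ∀ z : TE × TE,
      (z = ((p, v), (p', v')) ∨ z = ((p, v), (q', w')) ∨
       z = ((q, w), (p', v')) ∨ z = ((q, w), (q', w'))) →
      A + κ * (dist z.1.1 z.2.1 - u z.1.1 + u z.2.1) ≤ dist z.1.1 z.2.1 + dist z.1.2 z.2.2) :
    ∀ r ∈ {r | ∃ T : Measure (TE × TE), IsCoupling T (combo (p, v) (q, w)) (combo (p', v') (q', w')) ∧
      IsOptPlan (T.map (fun z => (z.1.1, z.2.1)))
        ((combo (p, v) (q, w) : Measure TE).map Prod.fst)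
        ((combo (p', v') (q', w') : Measure TE).map Prod.fst) ∧
      r = ∫ z, (dist z.1.1 z.2.1 + dist z.1.2 z.2.2) ∂T}, A ≤ r := by
  rintro r ⟨T, ⟨hT1, hT2⟩, hOpt, rfl⟩
  haveI : IsProbabilityMeasure (combo (p, v) (q, w) : Measure TE) := isProb_combo _ _
  haveI : IsProbabilityMeasure T := isProb_of_map_fst hT1
  have hquad := ae_quad hT1 hT2
  -- value of the base integral
  have hbase : ∫ z : TE × TE, dist z.1.1 z.2.1 ∂T = D := by
    have hmap := integral_map (μ := T) measurable_pi13.aemeasurable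
      (f := fun x : Euc 2 × Euc 2 => dist x.1 x.2)
      (continuous_fst.dist continuous_snd).aestronglyMeasurable
    have hopt2 := hOpt.2
    rw [map_combo measurable_fst, map_combo measurable_fst] at hopt2
    simp only at hopt2
    rw [hW] at hopt2
    rw [← hmap]
    exact hopt2
  -- values of the potential integrals
  have hmarg1 : T.map (Prod.fst ∘ Prod.fst) = combo p q := by
    have : (T.map Prod.fst).map Prod.fst = T.map (Prod.fst ∘ Prod.fst) :=
      Measure.map_map measurable_fst measurable_fst
    rw [hT1, map_combo measurable_fst] at this
    exact this.symm
  have hmarg2 : T.map (Prod.fst ∘ Prod.snd) = combo p' q' := by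
    have : (T.map Prod.snd).map Prod.fst = T.map (Prod.fst ∘ Prod.snd) :=
      Measure.map_map measurable_fst measurable_snd
    rw [hT2, map_combo measurable_fst] at this
    exact this.symm
  have hu1 : ∫ z : TE × TE, u z.1.1 ∂T = (u p + u q) / 2 := by
    have h := integral_map (μ := T) (φ := Prod.fst ∘ Prod.fst)
      (measurable_fst.comp measurable_fst).aemeasurable
      (f := u) hc.aestronglyMeasurable
    rw [hmarg1, integral_combo] at h
    exact h.symm
  have hu2 : ∫ z : TE × TE, u z.2.1 ∂T = (u p' + u q') / 2 := by
    have h := integral_map (μ := T) (φ := Prod.fst ∘ Prod.snd)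
      (measurable_fst.comp measurable_snd).aemeasurable
      (f := u) hc.aestronglyMeasurable
    rw [hmarg2, integral_combo] at h
    exact h.symm
  -- integrability
  have hib : Integrable (fun z : TE × TE => dist z.1.1 z.2.1) T :=
    integrable_of_quad ((continuous_fst.fst.dist continuous_snd.fst)).aestronglyMeasurable hquad
  have hiu1 : Integrable (fun z : TE × TE => u z.1.1) T :=
    integrable_of_quad (hc.comp continuous_fst.fst).aestronglyMeasurable hquad
  have hiu2 : Integrable (fun z : TE × TE => u z.2.1) T :=
    integrable_of_quad (hc.comp continuous_snd.fst).aestronglyMeasurable hquad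
  have hicost : Integrable (fun z : TE × TE => dist z.1.1 z.2.1 + dist z.1.2 z.2.2) T :=
    integrable_of_quad continuous_cost.aestronglyMeasurable hquad
  have hifs : Integrable (fun z : TE × TE => dist z.1.1 z.2.1 - u z.1.1) T := hib.sub hiu1
  have hie : Integrable (fun z : TE × TE => dist z.1.1 z.2.1 - u z.1.1 + u z.2.1) T :=
    hifs.add hiu2
  have key : ∫ z : TE × TE, (A + κ * (dist z.1.1 z.2.1 - u z.1.1 + u z.2.1)) ∂T ≤
      ∫ z : TE × TE, (dist z.1.1 z.2.1 + dist z.1.2 z.2.2) ∂T := by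
    refine integral_mono_ae (by exact (integrable_const A).add (hie.const_mul κ)) hicost ?_
    filter_upwards [hquad] with z hz
    exact hpt z hz
  have lhs : ∫ z : TE × TE, (A + κ * (dist z.1.1 z.2.1 - u z.1.1 + u z.2.1)) ∂T = A := by
    rw [integral_add (integrable_const A) (hie.const_mul κ), integral_const,
      integral_const_mul, integral_add hifs hiu2, integral_sub hib hiu1,
      hbase, hu1, hu2]
    rw [show D - (u p + u q) / 2 + (u p' + u q') / 2 = 0 by linarith, mul_zero, add_zero,
      probReal_univ]
    simp
  rw [lhs] at key
  exact key

/-- Upper bound: the diagonal-pairing plan is admissible. -/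
lemma dTri_mem {p q p' q' : Euc 2} {v w v' w' : Euc 2} {D r : ℝ}
    (hW : Wass (combo p q) (combo p' q') = D)
    (hbase : (dist p p' + dist q q') / 2 = D)
    (hr : (dist p p' + dist v v' + (dist q q' + dist w w')) / 2 = r) :
    r ∈ {r | ∃ T : Measure (TE × TE), IsCoupling T (combo (p, v) (q, w)) (combo (p', v') (q', w')) ∧
      IsOptPlan (T.map (fun z => (z.1.1, z.2.1)))
        ((combo (p, v) (q, w) : Measure TE).map Prod.fst)
        ((combo (p', v') (q', w') : Measure TE).map Prod.fst) ∧
      r = ∫ z, (dist z.1.1 z.2.1 + dist z.1.2 z.2.2) ∂T} := by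
  refine ⟨combo ((p, v), (p', v')) ((q, w), (q', w')),
    ⟨map_combo measurable_fst _ _, map_combo measurable_snd _ _⟩, ?_, ?_⟩
  · constructor
    · rw [map_combo measurable_pi13, map_combo measurable_fst, map_combo measurable_fst]
      exact ⟨map_combo measurable_fst _ _, map_combo measurable_snd _ _⟩
    · rw [map_combo measurable_pi13, map_combo measurable_fst, map_combo measurable_fst]
      rw [integral_combo (fun x : Euc 2 × Euc 2 => dist x.1 x.2), hW]
      exact hbase
  · rw [integral_combo (fun z : TE × TE => dist z.1.1 z.2.1 + dist z.1.2 z.2.2)]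
    exact hr.symm

end DTriLemmas

section Concrete

open MDE

lemma dpt (a b c d : ℝ) : dist (pt a b) (pt c d) = Real.sqrt ((a-c)^2 + (b-d)^2) := by
  rw [EuclideanSpace.dist_eq]
  congr 1
  simp [pt, Fin.sum_univ_two, Real.dist_eq, sq_abs]

lemma sqrt_four : Real.sqrt 4 = 2 := by
  rw [show (4:ℝ) = 2^2 by norm_num, Real.sqrt_sq (by norm_num : (0:ℝ) ≤ 2)]

lemma sq_sqrt2 : Real.sqrt 2 ^ 2 = 2 := Real.sq_sqrt (by norm_num)

lemma one_le_sqrt2 : (1:ℝ) ≤ Real.sqrt 2 := by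
  nlinarith [sq_sqrt2, Real.sqrt_nonneg 2]

lemma sqrt2_le_two : Real.sqrt 2 ≤ 2 := by
  nlinarith [sq_sqrt2, Real.sqrt_nonneg 2]

-- distances between base points
lemma d11 : dist (pt 0 0) (pt 0 1) = 1 := by rw [dpt]; norm_num
lemma d12 : dist (pt 0 0) (pt 1 (-1)) = Real.sqrt 2 := by rw [dpt]; norm_num
lemma d21 : dist (pt 1 0) (pt 0 1) = Real.sqrt 2 := by rw [dpt]; norm_num
lemma d22 : dist (pt 1 0) (pt 1 (-1)) = 1 := by rw [dpt]; norm_num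
lemma e11 : dist (pt 0 1) (pt 1 1) = 1 := by rw [dpt]; norm_num
lemma e12 : dist (pt 0 1) (pt 0 (-1)) = 2 := by rw [dpt]; norm_num [sqrt_four]
lemma e21 : dist (pt 1 (-1)) (pt 1 1) = 2 := by rw [dpt]; norm_num [sqrt_four]
lemma e22 : dist (pt 1 (-1)) (pt 0 (-1)) = 1 := by rw [dpt]; norm_num
lemma f11 : dist (pt 0 0) (pt 1 1) = Real.sqrt 2 := by rw [dpt]; norm_num
lemma f12 : dist (pt 0 0) (pt 0 (-1)) = 1 := by rw [dpt]; norm_num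
lemma f21 : dist (pt 1 0) (pt 1 1) = 1 := by rw [dpt]; norm_num
lemma f22 : dist (pt 1 0) (pt 0 (-1)) = Real.sqrt 2 := by rw [dpt]; norm_num
lemma g12 : dist (pt 1 0) (pt 3 0) = 2 := by rw [dpt]; norm_num [sqrt_four]
lemma g21 : dist (pt 3 0) (pt 1 0) = 2 := by rw [dpt]; norm_num [sqrt_four]

/-- Kantorovich potential for the pair `(μ₁, μ₂)`. -/
def u12 : Euc 2 → ℝ := fun x => min (dist x (pt 0 1)) (dist x (pt 1 (-1)))

/-- Kantorovich potential for the pairs `(μ₂, μ₃)` and `(μ₁, μ₃)`. -/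
def u13 : Euc 2 → ℝ := fun x => min (dist x (pt 1 1)) (dist x (pt 0 (-1)))

lemma u12_cont : Continuous u12 :=
  (continuous_id.dist continuous_const).min (continuous_id.dist continuous_const)

lemma u13_cont : Continuous u13 :=
  (continuous_id.dist continuous_const).min (continuous_id.dist continuous_const)

lemma u12_lip : ∀ x y : Euc 2, u12 x - u12 y ≤ dist x y := fun x y => min_dist_lip _ _ x y

lemma u13_lip : ∀ x y : Euc 2, u13 x - u13 y ≤ dist x y := fun x y => min_dist_lip _ _ x y

lemma u12_a1 : u12 (pt 0 0) = 1 := by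
  rw [u12, d11, d12]; exact min_eq_left one_le_sqrt2
lemma u12_a2 : u12 (pt 1 0) = 1 := by
  rw [u12, d21, d22]; exact min_eq_right one_le_sqrt2
lemma u12_b1 : u12 (pt 0 1) = 0 := by
  rw [u12, dist_self]; exact min_eq_left dist_nonneg
lemma u12_b2 : u12 (pt 1 (-1)) = 0 := by
  rw [u12, dist_self]; exact min_eq_right dist_nonneg

lemma u13_a1 : u13 (pt 0 0) = 1 := by
  rw [u13, f11, f12]; exact min_eq_right one_le_sqrt2
lemma u13_a2 : u13 (pt 1 0) = 1 := by
  rw [u13, f21, f22]; exact min_eq_left one_le_sqrt2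
lemma u13_b1 : u13 (pt 0 1) = 1 := by
  rw [u13, e11, e12]; norm_num
lemma u13_b2 : u13 (pt 1 (-1)) = 1 := by
  rw [u13, e21, e22]; norm_num
lemma u13_c1 : u13 (pt 1 1) = 0 := by
  rw [u13, dist_self]; exact min_eq_left dist_nonneg
lemma u13_c2 : u13 (pt 0 (-1)) = 0 := by
  rw [u13, dist_self]; exact min_eq_right dist_nonneg

-- the three base Wasserstein distances
lemma W12 : Wass (combo (pt 0 0) (pt 1 0)) (combo (pt 0 1) (pt 1 (-1))) = 1 := by
  refine wass_eq u12 u12_cont u12_lip ?_ ?_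
  · rw [u12_a1, u12_a2, u12_b1, u12_b2]; norm_num
  · rw [d11, d22]; norm_num

lemma W23 : Wass (combo (pt 0 1) (pt 1 (-1))) (combo (pt 1 1) (pt 0 (-1))) = 1 := by
  refine wass_eq u13 u13_cont u13_lip ?_ ?_
  · rw [u13_b1, u13_b2, u13_c1, u13_c2]; norm_num
  · rw [e11, e22]; norm_num

lemma combo_comm {α : Type*} [MeasurableSpace α] (p q : α) : combo p q = combo q p :=
  add_comm _ _

lemma W13' : Wass (combo (pt 0 0) (pt 1 0)) (combo (pt 0 (-1)) (pt 1 1)) = 1 := by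
  refine wass_eq u13 u13_cont u13_lip ?_ ?_
  · rw [u13_a1, u13_a2, u13_c1, u13_c2]; norm_num
  · rw [f12, f21]; norm_num

lemma W13 : Wass (combo (pt 0 0) (pt 1 0)) (combo (pt 1 1) (pt 0 (-1))) = 1 := by
  rw [combo_comm (pt 1 1) (pt 0 (-1))]; exact W13'

-- the three dTri values
lemma dTri12 :
    dTri (combo (pt 0 0, pt 1 0) (pt 1 0, pt 3 0)) (combo (pt 0 1, pt 1 0) (pt 1 (-1), pt 3 0))
      = 1 := by
  rw [dTri]
  refine le_antisymm (csInf_le (dTri_bddBelow _ _) (dTri_mem W12 ?_ ?_)) ?_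
  · rw [d11, d22]; norm_num
  · rw [d11, d22, dist_self, dist_self]; norm_num
  · refine le_csInf ⟨1, dTri_mem W12 ?_ ?_⟩ ?_
    · rw [d11, d22]; norm_num
    · rw [d11, d22, dist_self, dist_self]; norm_num
    · refine dTri_lb (κ := 1) u12 u12_cont W12 ?_ ?_
      · rw [u12_a1, u12_a2, u12_b1, u12_b2]; norm_num
      · rintro z (rfl | rfl | rfl | rfl) <;>
          simp only [u12_a1, u12_a2, u12_b1, u12_b2, d11, d12, d21, d22,
            dist_self, g12, g21] <;> nlinarith [one_le_sqrt2]

lemma dTri23 :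
    dTri (combo (pt 0 1, pt 1 0) (pt 1 (-1), pt 3 0)) (combo (pt 1 1, pt 1 0) (pt 0 (-1), pt 3 0))
      = 1 := by
  rw [dTri]
  refine le_antisymm (csInf_le (dTri_bddBelow _ _) (dTri_mem W23 ?_ ?_)) ?_
  · rw [e11, e22]; norm_num
  · rw [e11, e22, dist_self, dist_self]; norm_num
  · refine le_csInf ⟨1, dTri_mem W23 ?_ ?_⟩ ?_
    · rw [e11, e22]; norm_num
    · rw [e11, e22, dist_self, dist_self]; norm_num
    · refine dTri_lb (κ := 1) u13 u13_cont W23 ?_ ?_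
      · rw [u13_b1, u13_b2, u13_c1, u13_c2]; norm_num
      · rintro z (rfl | rfl | rfl | rfl) <;>
          simp only [u13_b1, u13_b2, u13_c1, u13_c2, e11, e12, e21, e22,
            dist_self, g12, g21] <;> nlinarith [one_le_sqrt2]

lemma dTri13 :
    dTri (combo (pt 0 0, pt 1 0) (pt 1 0, pt 3 0)) (combo (pt 1 1, pt 1 0) (pt 0 (-1), pt 3 0))
      = 3 := by
  rw [dTri]
  refine le_antisymm ?_ ?_
  · rw [combo_comm (pt 1 1, pt 1 0) (pt 0 (-1), pt 3 0)]
    refine csInf_le (dTri_bddBelow _ _) (dTri_mem W13' ?_ ?_)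
    · rw [f12, f21]; norm_num
    · rw [f12, f21, g12, g21]; norm_num
  · refine le_csInf ⟨3, ?_⟩ ?_
    · rw [combo_comm (pt 1 1, pt 1 0) (pt 0 (-1), pt 3 0)]
      refine dTri_mem W13' ?_ ?_
      · rw [f12, f21]; norm_num
      · rw [f12, f21, g12, g21]; norm_num
    · refine dTri_lb (κ := -1 - 2 * Real.sqrt 2) u13 u13_cont W13 ?_ ?_
      · rw [u13_a1, u13_a2, u13_c1, u13_c2]; norm_num
      · rintro z (rfl | rfl | rfl | rfl) <;>
          simp only [u13_a1, u13_a2, u13_c1, u13_c2, f11, f12, f21, f22,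
            dist_self, g12, g21] <;> nlinarith [sq_sqrt2, Real.sqrt_nonneg 2]

end Concrete

end MDEProof

/-- Remark 4.1: the quantity `d` fails the triangle inequality. -/
theorem dTri_not_triangle :
    let V₁ : Measure (Euc 2 × Euc 2) :=
      (1/2 : ℝ≥0∞) • Measure.dirac (pt 0 0, pt 1 0) + (1/2 : ℝ≥0∞) • Measure.dirac (pt 1 0, pt 3 0)
    let V₂ : Measure (Euc 2 × Euc 2) :=
      (1/2 : ℝ≥0∞) • Measure.dirac (pt 0 1, pt 1 0) + (1/2 : ℝ≥0∞) • Measure.dirac (pt 1 (-1), pt 3 0)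
    let V₃ : Measure (Euc 2 × Euc 2) :=
      (1/2 : ℝ≥0∞) • Measure.dirac (pt 1 1, pt 1 0) + (1/2 : ℝ≥0∞) • Measure.dirac (pt 0 (-1), pt 3 0)
    dTri V₁ V₂ = 1 ∧ dTri V₂ V₃ = 1 ∧ dTri V₁ V₃ = 3 ∧
      ¬ dTri V₁ V₃ ≤ dTri V₁ V₂ + dTri V₂ V₃ := by
  intro V₁ V₂ V₃
  have h12 : dTri V₁ V₂ = 1 := MDEProof.dTri12
  have h23 : dTri V₂ V₃ = 1 := MDEProof.dTri23
  have h13 : dTri V₁ V₃ = 3 := MDEProof.dTri13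
  refine ⟨h12, h23, h13, ?_⟩
  rw [h12, h23, h13]
  norm_num

end
end

section
/- Let v : ℝⁿ → ℝⁿ and define the PVF V^v[μ] = μ ⊗ δ_{v(x)} (i.e. V^v[μ] = (id, v)#μ). Then V^v satisfies the Lipschitz-type condition (H3) restricted to finite convex combinations of Dirac deltas if and only if v is locally Lipschitz continuous. -/
open MeasureTheory Metric Set Filter
open scoped NNReal ENNReal Topology

noncomputable section

open MDE

section Aux

variable {Y : Type*} [MeasurableSpace Y]

/-- If a measure is concentrated at a point and has total mass 1, every integral is
evaluation at the point. -/
lemma integral_of_conc {τ : Measure Y} {q : Y} (h0 : τ {q}ᶜ = 0) (h1 : τ Set.univ = 1)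
    (f : Y → ℝ) : ∫ a, f a ∂τ = f q := by
  have hae : f =ᵐ[τ] fun _ => f q := by
    refine measure_mono_null ?_ h0
    intro a ha
    simp only [Set.mem_setOf_eq] at ha
    simp only [Set.mem_compl_iff, Set.mem_singleton_iff]
    intro h; exact ha (show f a = f q by rw [h])
  rw [integral_congr_ae hae, integral_const]
  simp [h1, Measure.real]

/-- A coupling of two Dirac measures is concentrated at the pair and has mass 1. -/
lemma coupling_dirac_conc [MeasurableSingletonClass Y] {τ : Measure (Y × Y)} {x y : Y}
    (h : IsCoupling τ (Measure.dirac x) (Measure.dirac y)) :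
    τ {(x, y)}ᶜ = 0 ∧ τ Set.univ = 1 := by
  obtain ⟨h1, h2⟩ := h
  have hx : τ (Prod.fst ⁻¹' {x}ᶜ) = 0 := by
    rw [← Measure.map_apply measurable_fst (MeasurableSet.singleton x).compl, h1]
    simp
  have hy : τ (Prod.snd ⁻¹' {y}ᶜ) = 0 := by
    rw [← Measure.map_apply measurable_snd (MeasurableSet.singleton y).compl, h2]
    simp
  constructor
  · refine measure_mono_null ?_ (measure_union_null hx hy)
    intro p hp
    simp only [Set.mem_compl_iff, Set.mem_singleton_iff] at hp
    by_cases hpx : p.1 = x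
    · right
      simp only [Set.mem_preimage, Set.mem_compl_iff, Set.mem_singleton_iff]
      intro hpy; exact hp (Prod.ext hpx hpy)
    · left
      simpa using hpx
  · have : τ.map Prod.fst Set.univ = τ Set.univ := by
      rw [Measure.map_apply measurable_fst MeasurableSet.univ]; rfl
    rw [← this, h1]; simp

lemma msc_prod {α β : Type*} [MeasurableSpace α] [MeasurableSpace β]
    [MeasurableSingletonClass α] [MeasurableSingletonClass β] :
    MeasurableSingletonClass (α × β) :=
  ⟨fun a => by
    rw [← Set.singleton_prod_singleton]
    exact (measurableSet_singleton a.1).prod (measurableSet_singleton a.2)⟩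

lemma wass_nonneg {Y : Type*} [MeasurableSpace Y] [PseudoMetricSpace Y]
    (μ ν : Measure Y) : 0 ≤ Wass μ ν := by
  refine Real.sInf_nonneg ?_
  rintro r ⟨τ, -, rfl⟩
  exact integral_nonneg fun p => dist_nonneg

lemma wass_dirac {n : ℕ} (x y : Euc n) :
    Wass (Measure.dirac x) (Measure.dirac y) = dist x y := by
  have hset : { r | ∃ τ : Measure (Euc n × Euc n),
      IsCoupling τ (Measure.dirac x) (Measure.dirac y) ∧ r = ∫ p, dist p.1 p.2 ∂τ }
      = {dist x y} := by
    ext r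
    constructor
    · rintro ⟨τ, hc, rfl⟩
      obtain ⟨h0, h1⟩ := coupling_dirac_conc hc
      simp [integral_of_conc h0 h1 (fun p : Euc n × Euc n => dist p.1 p.2)]
    · rintro rfl
      refine ⟨Measure.dirac (x, y), ⟨?_, ?_⟩, ?_⟩
      · rw [Measure.map_dirac' measurable_fst]
      · rw [Measure.map_dirac' measurable_snd]
      · rw [integral_dirac]
  rw [Wass, hset, csInf_singleton]

lemma vvec_dirac {n : ℕ} {v : Euc n → Euc n} (hv : Measurable v) (x : Euc n) :
    Vvec v (Measure.dirac x) = Measure.dirac (x, v x) := by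
  rw [Vvec, Measure.map_dirac' (f := fun x : Euc n => (x, v x)) (measurable_id'.prodMk hv)]

lemma calW_dirac {n : ℕ} {v : Euc n → Euc n} (hv : Measurable v) (x y : Euc n) :
    calW (Vvec v (Measure.dirac x)) (Vvec v (Measure.dirac y)) = dist (v x) (v y) := by
  haveI : MeasurableSingletonClass ((Euc n × Euc n) × (Euc n × Euc n)) := msc_prod
  rw [vvec_dirac hv x, vvec_dirac hv y]
  have hset : { r | ∃ T : Measure ((Euc n × Euc n) × (Euc n × Euc n)),
      IsCoupling T (Measure.dirac (x, v x)) (Measure.dirac (y, v y)) ∧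
      IsOptPlan (T.map (fun p => (p.1.1, p.2.1)))
        ((Measure.dirac (x, v x)).map Prod.fst) ((Measure.dirac (y, v y)).map Prod.fst) ∧
      r = ∫ p, dist p.1.2 p.2.2 ∂T } = {dist (v x) (v y)} := by
    ext r
    constructor
    · rintro ⟨T, hc, -, rfl⟩
      obtain ⟨h0, h1⟩ := coupling_dirac_conc hc
      simp [integral_of_conc h0 h1
        (fun p : (Euc n × Euc n) × (Euc n × Euc n) => dist p.1.2 p.2.2)]
    · rintro rfl
      refine ⟨Measure.dirac ((x, v x), (y, v y)), ⟨?_, ?_⟩, ⟨⟨?_, ?_⟩, ?_⟩, ?_⟩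
      · rw [Measure.map_dirac' measurable_fst]
      · rw [Measure.map_dirac' measurable_snd]
      · rw [Measure.map_dirac' (f := fun p : (Euc n × Euc n) × (Euc n × Euc n) => (p.1.1, p.2.1))
          (measurable_fst.fst.prodMk measurable_snd.fst), Measure.map_dirac' measurable_fst,
          Measure.map_dirac' measurable_fst]
      · rw [Measure.map_dirac' (f := fun p : (Euc n × Euc n) × (Euc n × Euc n) => (p.1.1, p.2.1))
          (measurable_fst.fst.prodMk measurable_snd.fst), Measure.map_dirac' measurable_snd,
          Measure.map_dirac' measurable_fst]
      · rw [Measure.map_dirac' (f := fun p : (Euc n × Euc n) × (Euc n × Euc n) => (p.1.1, p.2.1))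
          (measurable_fst.fst.prodMk measurable_snd.fst), Measure.map_dirac' measurable_fst,
          Measure.map_dirac' measurable_fst, integral_dirac, wass_dirac]
      · rw [integral_dirac]
  rw [calW, hset, csInf_singleton]

lemma suppIn_dirac {n : ℕ} {R : ℝ} {x : Euc n} (hx : x ∈ closedBall 0 R) :
    SuppIn (Measure.dirac x) (closedBall 0 R) := by
  rw [SuppIn, Measure.dirac_apply' _ (measurableSet_closedBall.compl)]
  simp [hx]

lemma pc_dirac {n : ℕ} {R : ℝ} (hR : 0 ≤ R) {x : Euc n} (hx : x ∈ closedBall 0 R) :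
    Pc (Measure.dirac x) :=
  ⟨inferInstance, R, hR, suppIn_dirac hx⟩

lemma isDiracComb_dirac {n : ℕ} (x : Euc n) : IsDiracComb (Measure.dirac x) := by
  refine ⟨1, fun _ => 1, fun _ => x, fun _ => one_pos, by simp, by simp⟩

end Aux

/-- Proposition 6.2: `V^v` satisfies (H3) restricted to finite convex
combinations of Dirac deltas if and only if `v` is locally Lipschitz continuous. -/
theorem Vvec_H3_on_diracs_iff_locallyLipschitz (n : ℕ) (v : Euc n → Euc n)
    (hv : Measurable v) :
    (∀ R > (0:ℝ), ∃ K > (0:ℝ), ∀ μ ν : Measure (Euc n), Pc μ → Pc ν →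
      IsDiracComb μ → IsDiracComb ν →
      SuppIn μ (closedBall 0 R) → SuppIn ν (closedBall 0 R) →
      calW (Vvec v μ) (Vvec v ν) ≤ K * Wass μ ν) ↔
    (∀ R > (0:ℝ), ∃ L : ℝ≥0, LipschitzOnWith L v (closedBall 0 R)) := by
  constructor
  · -- (H3) on Diracs → locally Lipschitz
    intro h R hR
    obtain ⟨K, hK, hKle⟩ := h R hR
    refine ⟨K.toNNReal, ?_⟩
    rw [lipschitzOnWith_iff_dist_le_mul]
    intro x hx y hy
    have hle := hKle (Measure.dirac x) (Measure.dirac y) (pc_dirac hR.le hx)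
      (pc_dirac hR.le hy) (isDiracComb_dirac x) (isDiracComb_dirac y)
      (suppIn_dirac hx) (suppIn_dirac hy)
    rw [calW_dirac hv x y, wass_dirac x y] at hle
    calc dist (v x) (v y) ≤ K * dist x y := hle
      _ = (K.toNNReal : ℝ) * dist x y := by rw [Real.coe_toNNReal K hK.le]
  · -- locally Lipschitz → (H3) on Diracs
    intro h R hR
    obtain ⟨L, hL⟩ := h R hR
    refine ⟨(L : ℝ) + 1, by positivity, ?_⟩
    intro μ ν hμ hν _ _ hμs hνs
    by_cases hopt : ∃ τ : Measure (Euc n × Euc n), IsOptPlan τ μ ν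
    · obtain ⟨τ, hτc, hτi⟩ := hopt
      set g : Euc n × Euc n → (Euc n × Euc n) × (Euc n × Euc n) :=
        fun p => ((p.1, v p.1), (p.2, v p.2)) with hg_def
      have hg : Measurable g :=
        (measurable_fst.prodMk (hv.comp measurable_fst)).prodMk
          (measurable_snd.prodMk (hv.comp measurable_snd))
      -- τ lives on the ball × ball
      have hS1 : τ (Prod.fst ⁻¹' (closedBall (0:Euc n) R)ᶜ) = 0 := by
        rw [← Measure.map_apply measurable_fst measurableSet_closedBall.compl, hτc.1]
        exact hμs
      have hS2 : τ (Prod.snd ⁻¹' (closedBall (0:Euc n) R)ᶜ) = 0 := by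
        rw [← Measure.map_apply measurable_snd measurableSet_closedBall.compl, hτc.2]
        exact hνs
      have hae : ∀ᵐ p ∂τ, p.1 ∈ closedBall (0:Euc n) R ∧ p.2 ∈ closedBall (0:Euc n) R := by
        rw [ae_iff]
        refine measure_mono_null ?_ (measure_union_null hS1 hS2)
        intro p hp
        simp only [Set.mem_setOf_eq, not_and_or] at hp
        rcases hp with hp | hp
        · exact Or.inl hp
        · exact Or.inr hp
      have hdistmeas : Measurable (fun p : Euc n × Euc n => dist (v p.1) (v p.2)) :=
        (hv.comp measurable_fst).dist (hv.comp measurable_snd)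
      have hprob : IsProbabilityMeasure τ := by
        constructor
        have huniv : τ.map Prod.fst Set.univ = τ Set.univ := by
          rw [Measure.map_apply measurable_fst MeasurableSet.univ]; rfl
        rw [← huniv, hτc.1]
        exact hμ.1.measure_univ
      have hf2 : Integrable (fun p : Euc n × Euc n => dist p.1 p.2) τ := by
        refine Integrable.mono' (integrable_const (2 * R))
          (measurable_fst.dist measurable_snd).aestronglyMeasurable ?_
        filter_upwards [hae] with p hp
        rw [Real.norm_eq_abs, abs_of_nonneg dist_nonneg]
        calc dist p.1 p.2 ≤ dist p.1 0 + dist 0 p.2 := dist_triangle _ _ _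
          _ ≤ R + R := add_le_add (mem_closedBall.mp hp.1)
              (by rw [dist_comm]; exact mem_closedBall.mp hp.2)
          _ = 2 * R := by ring
      have hbound : ∀ᵐ p ∂τ, dist (v p.1) (v p.2) ≤ (L : ℝ) * dist p.1 p.2 :=
        hae.mono fun p hp => lipschitzOnWith_iff_dist_le_mul.mp hL _ hp.1 _ hp.2
      have hf1 : Integrable (fun p : Euc n × Euc n => dist (v p.1) (v p.2)) τ := by
        refine Integrable.mono' (hf2.const_mul (L : ℝ))
          hdistmeas.aestronglyMeasurable ?_
        filter_upwards [hbound] with p hp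
        rw [Real.norm_eq_abs, abs_of_nonneg dist_nonneg]
        exact hp
      have hint : ∫ p, dist (v p.1) (v p.2) ∂τ ≤ (L : ℝ) * Wass μ ν := by
        calc ∫ p, dist (v p.1) (v p.2) ∂τ
            ≤ ∫ p, (L : ℝ) * dist p.1 p.2 ∂τ :=
              integral_mono_ae hf1 (hf2.const_mul _) hbound
          _ = (L : ℝ) * ∫ p, dist p.1 p.2 ∂τ := integral_const_mul _ _
          _ = (L : ℝ) * Wass μ ν := by rw [hτi]
      -- the plan `τ.map g` witnesses the infimum defining `calW`
      have h1 : (Vvec v μ).map Prod.fst = μ := by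
        rw [Vvec, Measure.map_map measurable_fst (measurable_id'.prodMk hv)]
        exact Measure.map_id
      have h2 : (Vvec v ν).map Prod.fst = ν := by
        rw [Vvec, Measure.map_map measurable_fst (measurable_id'.prodMk hv)]
        exact Measure.map_id
      have hc1 : (τ.map g).map Prod.fst = Vvec v μ := by
        rw [Measure.map_map measurable_fst hg, Vvec, ← hτc.1,
          Measure.map_map (measurable_id'.prodMk hv) measurable_fst]
        rfl
      have hc2 : (τ.map g).map Prod.snd = Vvec v ν := by
        rw [Measure.map_map measurable_snd hg, Vvec, ← hτc.2,
          Measure.map_map (measurable_id'.prodMk hv) measurable_snd]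
        rfl
      have hproj : (τ.map g).map
          (fun p : (Euc n × Euc n) × (Euc n × Euc n) => (p.1.1, p.2.1)) = τ := by
        rw [Measure.map_map (measurable_fst.fst.prodMk measurable_snd.fst) hg]
        exact Measure.map_id
      have hintmap : ∫ p, dist p.1.2 p.2.2 ∂(τ.map g)
          = ∫ p, dist (v p.1) (v p.2) ∂τ := by
        rw [integral_map hg.aemeasurable
          (measurable_fst.snd.dist measurable_snd.snd).aestronglyMeasurable]
      have hmem : (∫ p, dist (v p.1) (v p.2) ∂τ) ∈
          { r | ∃ T : Measure ((Euc n × Euc n) × (Euc n × Euc n)),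
            IsCoupling T (Vvec v μ) (Vvec v ν) ∧
            IsOptPlan (T.map (fun p => (p.1.1, p.2.1)))
              ((Vvec v μ).map Prod.fst) ((Vvec v ν).map Prod.fst) ∧
            r = ∫ p, dist p.1.2 p.2.2 ∂T } := by
        refine ⟨τ.map g, ⟨hc1, hc2⟩, ?_, hintmap.symm⟩
        rw [hproj, h1, h2]
        exact ⟨hτc, hτi⟩
      have hbdd : BddBelow { r | ∃ T : Measure ((Euc n × Euc n) × (Euc n × Euc n)),
          IsCoupling T (Vvec v μ) (Vvec v ν) ∧
          IsOptPlan (T.map (fun p => (p.1.1, p.2.1)))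
            ((Vvec v μ).map Prod.fst) ((Vvec v ν).map Prod.fst) ∧
          r = ∫ p, dist p.1.2 p.2.2 ∂T } := by
        refine ⟨0, ?_⟩
        rintro r ⟨T, -, -, rfl⟩
        exact integral_nonneg fun p => dist_nonneg
      calc calW (Vvec v μ) (Vvec v ν) ≤ ∫ p, dist (v p.1) (v p.2) ∂τ :=
            csInf_le hbdd hmem
        _ ≤ (L : ℝ) * Wass μ ν := hint
        _ ≤ ((L : ℝ) + 1) * Wass μ ν :=
            mul_le_mul_of_nonneg_right (le_add_of_nonneg_right zero_le_one)
              (wass_nonneg μ ν)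
    · -- no optimal plan exists : the defining set of `calW` is empty
      have hempty : { r | ∃ T : Measure ((Euc n × Euc n) × (Euc n × Euc n)),
          IsCoupling T (Vvec v μ) (Vvec v ν) ∧
          IsOptPlan (T.map (fun p => (p.1.1, p.2.1)))
            ((Vvec v μ).map Prod.fst) ((Vvec v ν).map Prod.fst) ∧
          r = ∫ p, dist p.1.2 p.2.2 ∂T } = ∅ := by
        rw [Set.eq_empty_iff_forall_notMem]
        rintro r ⟨T, -, hTopt, -⟩
        refine hopt ⟨T.map (fun p => (p.1.1, p.2.1)), ?_⟩
        have h1 : (Vvec v μ).map Prod.fst = μ := by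
          rw [Vvec, Measure.map_map measurable_fst (measurable_id'.prodMk hv)]
          exact Measure.map_id
        have h2 : (Vvec v ν).map Prod.fst = ν := by
          rw [Vvec, Measure.map_map measurable_fst (measurable_id'.prodMk hv)]
          exact Measure.map_id
        rwa [h1, h2] at hTopt
      rw [calW, hempty, Real.sInf_empty]
      exact mul_nonneg (by positivity) (wass_nonneg μ ν)

end
end

section
/- Let v : ℝⁿ → ℝⁿ be locally Lipschitz with sublinear growth (|v(x)| ≤ C(1+|x|)). Then the PVF V^v[μ] = (id, v)#μ satisfies (H3) on all of P_c(ℝⁿ): for every R > 0, if supp(μ₁), supp(μ₂) ⊆ B(0,R) then 𝒲(V^v[μ₁], V^v[μ₂]) ≤ L(v,R)·W(μ₁, μ₂), where L(v,R) is the Lipschitz constant of v on B(0,R). -/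
open MeasureTheory Metric Set Filter
open scoped NNReal ENNReal Topology

noncomputable section

open MDE

/-- part of Theorem 6.3: if `v` is locally Lipschitz with sublinear
growth then `V^v = (id,v)#·` satisfies (H3) on all of `P_c(ℝⁿ)`, with constant the
Lipschitz constant of `v` on `B(0,R)`. -/
theorem Vvec_H3 (n : ℕ) (C : ℝ) (v : Euc n → Euc n) (hv : Measurable v)
    (hloc : ∀ R > (0:ℝ), ∃ L : ℝ≥0, LipschitzOnWith L v (closedBall 0 R))
    (hsub : ∀ x, ‖v x‖ ≤ C * (1 + ‖x‖))
    (R : ℝ) (hR : 0 < R) (L : ℝ≥0) (hL : LipschitzOnWith L v (closedBall 0 R))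
    (μ₁ μ₂ : Measure (Euc n)) (h₁ : Pc μ₁) (h₂ : Pc μ₂)
    (hs₁ : SuppIn μ₁ (closedBall 0 R)) (hs₂ : SuppIn μ₂ (closedBall 0 R)) :
    calW (Vvec v μ₁) (Vvec v μ₂) ≤ (L : ℝ) * Wass μ₁ μ₂ := by
  classical
  have hWnn : 0 ≤ Wass μ₁ μ₂ := by
    apply Real.sInf_nonneg
    rintro r ⟨τ, -, rfl⟩
    exact integral_nonneg fun p => dist_nonneg
  have hLW : 0 ≤ (L : ℝ) * Wass μ₁ μ₂ := mul_nonneg L.coe_nonneg hWnn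
  -- marginals of Vvec
  have hfst : ∀ (μ : Measure (Euc n)), (Vvec v μ).map Prod.fst = μ := by
    intro μ
    rw [Vvec, Measure.map_map measurable_fst (measurable_id'.prodMk hv)]
    have : (Prod.fst ∘ fun x : Euc n => (x, v x)) = fun x => x := rfl
    rw [this, Measure.map_id']
  set S : Set ℝ := { r | ∃ T : Measure ((Euc n × Euc n) × (Euc n × Euc n)),
    IsCoupling T (Vvec v μ₁) (Vvec v μ₂) ∧
    IsOptPlan (T.map (fun p => (p.1.1, p.2.1)))
      ((Vvec v μ₁).map Prod.fst) ((Vvec v μ₂).map Prod.fst) ∧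
    r = ∫ p, dist p.1.2 p.2.2 ∂T } with hS
  rcases eq_empty_or_nonempty S with hE | ⟨r₀, T₀, hT₀c, hT₀opt, hr₀⟩
  · simp only [calW, ← hS, hE, Real.sInf_empty]
    exact hLW
  · -- extract an optimal plan
    set τ : Measure (Euc n × Euc n) := T₀.map (fun p => (p.1.1, p.2.1)) with hτdef
    rw [hfst, hfst] at hT₀opt
    obtain ⟨⟨hτ1, hτ2⟩, hτopt⟩ := hT₀opt
    have hprob : IsProbabilityMeasure τ := by
      constructor
      have := congrArg (fun m : Measure (Euc n) => m univ) hτ1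
      simp only [Measure.map_apply measurable_fst MeasurableSet.univ, preimage_univ] at this
      rw [this]
      exact h₁.1.measure_univ
    -- a.e. both coordinates in the ball
    have h1 : τ (Prod.fst ⁻¹' (closedBall 0 R)ᶜ) = 0 := by
      rw [← Measure.map_apply measurable_fst measurableSet_closedBall.compl, hτ1]
      exact hs₁
    have h2 : τ (Prod.snd ⁻¹' (closedBall 0 R)ᶜ) = 0 := by
      rw [← Measure.map_apply measurable_snd measurableSet_closedBall.compl, hτ2]
      exact hs₂
    have hae : ∀ᵐ p ∂τ, p.1 ∈ closedBall (0 : Euc n) R ∧ p.2 ∈ closedBall (0 : Euc n) R := by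
      rw [ae_iff]
      refine measure_mono_null (fun p hp => ?_)
        (measure_union_null h1 h2)
      by_cases hp1 : p.1 ∈ closedBall (0 : Euc n) R
      · right; simp only [mem_setOf_eq, not_and, mem_preimage, mem_compl_iff] at *
        exact hp hp1
      · left; exact hp1
    -- the good coupling
    set F : (Euc n × Euc n) → (Euc n × Euc n) × (Euc n × Euc n) :=
      fun p => ((p.1, v p.1), (p.2, v p.2)) with hFdef
    have hF : Measurable F :=
      ((measurable_fst.prodMk (hv.comp measurable_fst)).prodMk
        (measurable_snd.prodMk (hv.comp measurable_snd)))
    have hm1 : (τ.map F).map Prod.fst = Vvec v μ₁ := by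
      rw [Measure.map_map measurable_fst hF]
      have : (Prod.fst ∘ F) = (fun x => (x, v x)) ∘ Prod.fst := rfl
      rw [this, ← Measure.map_map (measurable_id'.prodMk hv) measurable_fst, hτ1, Vvec]
    have hm2 : (τ.map F).map Prod.snd = Vvec v μ₂ := by
      rw [Measure.map_map measurable_snd hF]
      have : (Prod.snd ∘ F) = (fun x => (x, v x)) ∘ Prod.snd := rfl
      rw [this, ← Measure.map_map (measurable_id'.prodMk hv) measurable_snd, hτ2, Vvec]
    have hbase : (τ.map F).map (fun p => (p.1.1, p.2.1)) = τ := by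
      rw [Measure.map_map (measurable_fst.fst.prodMk measurable_snd.fst) hF]
      have : ((fun p : (Euc n × Euc n) × (Euc n × Euc n) => (p.1.1, p.2.1)) ∘ F)
          = fun p => p := by funext p; rfl
      rw [this, Measure.map_id']
    haveI : OpensMeasurableSpace ((Euc n × Euc n) × (Euc n × Euc n)) :=
      Prod.opensMeasurableSpace
    have hint : (∫ p, dist p.1.2 p.2.2 ∂(τ.map F)) = ∫ p, dist (v p.1) (v p.2) ∂τ := by
      rw [integral_map hF.aemeasurable]
      exact ((continuous_fst.snd.dist continuous_snd.snd).aestronglyMeasurable)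
    -- membership in S
    have hmem : (∫ p, dist (v p.1) (v p.2) ∂τ) ∈ S := by
      refine ⟨τ.map F, ⟨hm1, hm2⟩, ?_, hint.symm⟩
      rw [hfst, hfst, hbase]
      exact ⟨⟨hτ1, hτ2⟩, hτopt⟩
    have hbdd : BddBelow S := by
      refine ⟨0, ?_⟩
      rintro r ⟨T, -, -, rfl⟩
      exact integral_nonneg fun p => dist_nonneg
    refine le_trans (csInf_le hbdd hmem) ?_
    -- bound the integral
    have hIg : Integrable (fun p : Euc n × Euc n => (L : ℝ) * dist p.1 p.2) τ := by
      refine Integrable.mono' (integrable_const ((L : ℝ) * (2 * R)))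
        ((continuous_const.mul (continuous_fst.dist continuous_snd)).aestronglyMeasurable) ?_
      filter_upwards [hae] with p hp
      rw [Real.norm_eq_abs, abs_of_nonneg (mul_nonneg L.coe_nonneg dist_nonneg)]
      refine mul_le_mul_of_nonneg_left ?_ L.coe_nonneg
      have := dist_triangle p.1 (0 : Euc n) p.2
      simp only [mem_closedBall, dist_zero_right] at hp
      calc dist p.1 p.2 ≤ dist p.1 0 + dist 0 p.2 := dist_triangle _ _ _
        _ ≤ R + R := by
            rw [dist_zero_right, dist_comm, dist_zero_right]
            exact add_le_add hp.1 hp.2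
        _ = 2 * R := by ring
    have hle : (∫ p, dist (v p.1) (v p.2) ∂τ) ≤ ∫ p, (L : ℝ) * dist p.1 p.2 ∂τ := by
      refine integral_mono_of_nonneg ?_ hIg ?_
      · exact Eventually.of_forall fun p => dist_nonneg
      · filter_upwards [hae] with p hp
        exact hL.dist_le_mul _ hp.1 _ hp.2
    calc (∫ p, dist (v p.1) (v p.2) ∂τ) ≤ ∫ p, (L : ℝ) * dist p.1 p.2 ∂τ := hle
      _ = (L : ℝ) * ∫ p, dist p.1 p.2 ∂τ := integral_const_mul _ _
      _ = (L : ℝ) * Wass μ₁ μ₂ := by rw [hτopt]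


end
end
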